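/- arXiv:1811.00593 — 6 statements merged into one kernel-verified Lean document; each statement's English description precedes it below -/
import Mathlib

section
/- Let a_1,…,a_n > 0, let μ_P be a probability measure on [0,∞)^n with multivariate Laplace transform φ_P(w) = ∫ exp(−⟨w,z⟩) dμ_P(z), and let ν be the pushforward of μ_P under the map z ↦ (0,…,0, H_1 a_1 z_1, …, H_n a_n z_n) ∈ [0,∞)^{2n}. Assume ∫ log(1+‖y‖) dν(y) < ∞ and let g be a probability measure on [0,∞)^{2n} with ∫ exp(−⟨s,y⟩) dg(y) = exp( −λ·∫_0^∞ (1 − ν̃(exp(τ·Mᵀ)·s)) dτ ) for all s ∈ [0,∞)^{2n}. Then for each e ∈ {1,…,n} and every s ≥ 0, the Laplace transform of the e-th streamflow marginal of g satisfies ∫ exp(−s·y_e) dg(y) = exp( −(λ/H_1)·∫_0^1 (1 − φ_P( (H_1 a_1 (m_e(u))_1 s, …, H_n a_n (m_e(u))_n s) ))/u du ). -/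
set_option maxHeartbeats 1000000

open MeasureTheory Matrix Filter Topology

noncomputable section

/-- The drift matrix `M = [[-KΛ, K], [0, -H]]` of the drainage network. -/
def driftM {n : ℕ} (Λ : Matrix (Fin n) (Fin n) ℝ) (K H : Fin n → ℝ) :
    Matrix (Fin n ⊕ Fin n) (Fin n ⊕ Fin n) ℝ :=
  Matrix.fromBlocks (-(Matrix.diagonal K * Λ)) (Matrix.diagonal K) 0 (-(Matrix.diagonal H))

/-- `(m_e(u))_i = (exp(−(log u / H_1)·Mᵀ))_{n+i, e}`: the lower half of the column of
`exp(−(log u / H_1)·Mᵀ)` corresponding to the streamflow coordinate `e`. -/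
def mVec {n : ℕ} (hn : 0 < n) (Λ : Matrix (Fin n) (Fin n) ℝ) (K H : Fin n → ℝ)
    (e : Fin n) (u : ℝ) : Fin n → ℝ :=
  fun i => NormedSpace.exp ((-(Real.log u / H ⟨0, hn⟩)) • (driftM Λ K H)ᵀ)
    (Sum.inr i) (Sum.inl e)

/-- Auxiliary dot-product computation. -/
lemma aux_dot {n : ℕ} (H a : Fin n → ℝ) (e : Fin n) (s : ℝ)
    (E : Matrix (Fin n ⊕ Fin n) (Fin n ⊕ Fin n) ℝ) (z : Fin n → ℝ) :
    (E.mulVec (fun j => if j = Sum.inl e then s else 0) ⬝ᵥ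
      (Sum.elim (fun _ => (0:ℝ)) (fun i => H i * a i * z i) : Fin n ⊕ Fin n → ℝ))
    = ((fun i => H i * a i * E (Sum.inr i) (Sum.inl e) * s) ⬝ᵥ z) := by
  have hmv : ∀ i, E.mulVec (fun j => if j = Sum.inl e then s else 0) (Sum.inr i)
      = E (Sum.inr i) (Sum.inl e) * s := by
    intro i
    simp [Matrix.mulVec, dotProduct, mul_ite, Finset.sum_ite_eq']
  simp only [dotProduct, Fintype.sum_sum_type, Sum.elim_inl, Sum.elim_inr,
    mul_zero, Finset.sum_const_zero, zero_add]
  refine Finset.sum_congr rfl fun i _ => ?_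
  rw [hmv i]; ring

/-- Auxiliary: the inner `ν`-integral expressed as a `μP`-integral, for an
abstract matrix `E`. -/
lemma aux_inner {n : ℕ} (H a : Fin n → ℝ) (e : Fin n) (s : ℝ)
    (E : Matrix (Fin n ⊕ Fin n) (Fin n ⊕ Fin n) ℝ)
    (μP : Measure (Fin n → ℝ))
    (ν : Measure ((Fin n ⊕ Fin n) → ℝ))
    (hνdef : ν = μP.map (fun z => Sum.elim (fun _ => (0:ℝ)) (fun i => H i * a i * z i))) :
    (∫ y, Real.exp (-(E.mulVec (fun j => if j = Sum.inl e then s else 0) ⬝ᵥ y)) ∂ν)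
    = ∫ z, Real.exp (-((fun i => H i * a i * E (Sum.inr i) (Sum.inl e) * s) ⬝ᵥ z)) ∂μP := by
  set s' : (Fin n ⊕ Fin n) → ℝ := fun j => if j = Sum.inl e then s else 0 with hs'def
  have hTmeas : Measurable (fun z : Fin n → ℝ =>
      (Sum.elim (fun _ => (0:ℝ)) (fun i => H i * a i * z i) : Fin n ⊕ Fin n → ℝ)) := by
    rw [measurable_pi_iff]
    rintro (i | i)
    · simp only [Sum.elim_inl]; exact measurable_const
    · exact (measurable_pi_apply i).const_mul _
  have hcont : Continuous fun y : (Fin n ⊕ Fin n) → ℝ =>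
      Real.exp (-(E.mulVec s' ⬝ᵥ y)) := by
    apply Real.continuous_exp.comp
    apply Continuous.neg
    change Continuous fun y : (Fin n ⊕ Fin n) → ℝ => ∑ j, E.mulVec s' j * y j
    exact continuous_finset_sum _ fun j _ => continuous_const.mul (continuous_apply j)
  rw [hνdef, integral_map hTmeas.aemeasurable hcont.aestronglyMeasurable]
  refine integral_congr_ae (Filter.Eventually.of_forall fun z => ?_)
  exact congrArg (fun t => Real.exp (-t)) (aux_dot H a e s E z)

/-- Auxiliary: change of variables `τ = -log u / H1` mapping `(0,1]` onto `[0,∞)`. -/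
lemma aux_cov (H1 : ℝ) (hH1 : 0 < H1) (G : ℝ → ℝ) :
    ∫ τ in Set.Ioi (0:ℝ), G τ
      = H1⁻¹ * ∫ u in Set.Ioc (0:ℝ) 1, G (-(Real.log u / H1)) / u := by
  have hψderiv : ∀ x ∈ Set.Ioc (0:ℝ) 1,
      HasDerivWithinAt (fun u : ℝ => -(Real.log u / H1)) (-(x⁻¹ / H1)) (Set.Ioc 0 1) x :=
    fun x hx => (((Real.hasDerivAt_log hx.1.ne').div_const H1).neg).hasDerivWithinAt
  have hψinj : Set.InjOn (fun u : ℝ => -(Real.log u / H1)) (Set.Ioc 0 1) := by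
    intro u hu v hv h
    have hl : Real.log u = Real.log v := by
      field_simp [hH1.ne'] at h; linarith
    rw [← Real.exp_log hu.1, ← Real.exp_log hv.1, hl]
  have himg : (fun u : ℝ => -(Real.log u / H1)) '' Set.Ioc 0 1 = Set.Ici 0 := by
    ext τ
    constructor
    · rintro ⟨u, hu, rfl⟩
      have hlu : Real.log u ≤ 0 := Real.log_nonpos hu.1.le hu.2
      have : Real.log u / H1 ≤ 0 := div_nonpos_iff.mpr (Or.inr ⟨hlu, hH1.le⟩)
      simpa using neg_nonneg.mpr this
    · intro hτ
      have hτ0 : (0:ℝ) ≤ τ := hτ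
      refine ⟨Real.exp (-(H1 * τ)), ⟨Real.exp_pos _,
        Real.exp_le_one_iff.mpr (by nlinarith)⟩, ?_⟩
      simp only [Real.log_exp]
      field_simp
  rw [← MeasureTheory.integral_Ici_eq_integral_Ioi, ← himg,
    MeasureTheory.integral_image_eq_integral_abs_deriv_smul measurableSet_Ioc hψderiv hψinj]
  calc ∫ x in Set.Ioc (0:ℝ) 1, |(-(x⁻¹ / H1))| • G (-(Real.log x / H1))
      = ∫ u in Set.Ioc (0:ℝ) 1, H1⁻¹ • (G (-(Real.log u / H1)) / u) := by
        refine setIntegral_congr_fun measurableSet_Ioc fun u hu => ?_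
        have hu0 : 0 < u := hu.1
        rw [smul_eq_mul, smul_eq_mul, abs_neg,
          abs_of_pos (div_pos (inv_pos.mpr hu0) hH1)]
        ring
    _ = H1⁻¹ • ∫ u in Set.Ioc (0:ℝ) 1, G (-(Real.log u / H1)) / u := integral_smul _ _
    _ = H1⁻¹ * ∫ u in Set.Ioc (0:ℝ) 1, G (-(Real.log u / H1)) / u := rfl

/-- **Laplace transform of the invariant marginal distribution of streamflow `Q_e`.**
With rainfall concentrated on the runoff coordinates (`ν` the pushforward of `μ_P` under
`z ↦ (0, H_1a_1z_1, …, H_na_nz_n)`), the Laplace transform of the `e`-th streamflow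
marginal of the invariant measure `g` is
`exp(−(λ/H_1) ∫_0^1 (1 − φ_P(H a ∘ m_e(u) s))/u du)`. -/
theorem laplace_invariant_streamflow_marginal
    {n : ℕ} (hn : 1 ≤ n) (Λ : Matrix (Fin n) (Fin n) ℝ) (K H : Fin n → ℝ)
    (hΛdiag : ∀ i, Λ i i = 1)
    (hΛupper : ∀ i j : Fin n, j < i → Λ i j = 0)
    (hΛoff : ∀ i j : Fin n, i ≠ j → Λ i j ≤ 0)
    (hΛinv : IsUnit Λ.det)
    (hK : ∀ i, 0 < K i) (hH : ∀ i, 0 < H i)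
    (lam : ℝ) (hlam : 0 < lam)
    (a : Fin n → ℝ) (ha : ∀ i, 0 < a i)
    (μP : Measure (Fin n → ℝ)) [IsProbabilityMeasure μP]
    (hμP : μP {z | ∀ i, 0 ≤ z i} = 1)
    (ν : Measure ((Fin n ⊕ Fin n) → ℝ))
    (hνdef : ν = μP.map (fun z => Sum.elim (fun _ => (0:ℝ)) (fun i => H i * a i * z i)))
    (hlog : Integrable (fun y => Real.log (1 + ‖y‖)) ν)
    (g : Measure ((Fin n ⊕ Fin n) → ℝ)) [IsProbabilityMeasure g]
    (hgLaplace : ∀ s : (Fin n ⊕ Fin n) → ℝ, (∀ i, 0 ≤ s i) →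
      ∫ y, Real.exp (-(s ⬝ᵥ y)) ∂g
        = Real.exp (-(lam * ∫ τ in Set.Ioi (0:ℝ),
            (1 - ∫ y, Real.exp
              (-((NormedSpace.exp (τ • (driftM Λ K H)ᵀ)).mulVec s ⬝ᵥ y)) ∂ν)))) :
    ∀ e : Fin n, ∀ s : ℝ, 0 ≤ s →
      ∫ y, Real.exp (-(s * y (Sum.inl e))) ∂g
        = Real.exp (-(lam / H ⟨0, hn⟩ * ∫ u in Set.Ioc (0:ℝ) 1,
            (1 - ∫ z, Real.exp
              (-((fun i => H i * a i * mVec hn Λ K H e u i * s) ⬝ᵥ z)) ∂μP) / u)) := by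
  intro e s hs
  have hH1pos : 0 < H ⟨0, hn⟩ := hH _
  have hdot : ∀ y : (Fin n ⊕ Fin n) → ℝ,
      (fun j => if j = Sum.inl e then s else 0) ⬝ᵥ y = s * y (Sum.inl e) := by
    intro y
    simp [dotProduct, ite_mul, Finset.sum_ite_eq']
  have hg := hgLaplace (fun j => if j = Sum.inl e then s else 0)
    (by intro i; split <;> simp [hs])
  simp only [hdot] at hg
  simp only [fun τ : ℝ => aux_inner H a e s (NormedSpace.exp (τ • (driftM Λ K H)ᵀ))
    μP ν hνdef] at hg
  rw [hg, Real.exp_eq_exp, neg_inj]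
  rw [aux_cov (H ⟨0, hn⟩) hH1pos (fun τ => 1 - ∫ z, Real.exp
      (-((fun i => H i * a i * NormedSpace.exp (τ • (driftM Λ K H)ᵀ)
        (Sum.inr i) (Sum.inl e) * s) ⬝ᵥ z)) ∂μP)]
  simp only [mVec]
  ring

end
end

section
/- Let σ > 0 and let M_r : [0,1] → [0,∞) be continuous with ∫_0^1 M_r(u)/u du < ∞, attaining its maximum M* := max_{u∈[0,1]} M_r(u) > 0 at some point u* ∈ (0,1), and differentiable at u*. For s ∈ (−σ/M*, 0] define I(s) := ∫_0^1 (1/u)·(1 − σ/(σ + s·M_r(u))) du. Then: (a) I(s) is finite for every s ∈ (−σ/M*, 0]; and (b) I(s) → −∞ as s decreases to −σ/M*. (Consequently the Laplace transform exp(−(λ/H_r)·I(s)) of the invariant outlet discharge diverges to +∞ as s ↓ −σ/M*.) -/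
open MeasureTheory Filter Topology

set_option maxHeartbeats 1000000

noncomputable section

lemma laplace_part_a
    (σ : ℝ) (hσ : 0 < σ)
    (Mr : ℝ → ℝ) (hMr_cont : ContinuousOn Mr (Set.Icc (0:ℝ) 1))
    (hMr_nonneg : ∀ u ∈ Set.Icc (0:ℝ) 1, 0 ≤ Mr u)
    (hMr_int : IntegrableOn (fun u => Mr u / u) (Set.Ioc (0:ℝ) 1))
    (Mstar : ℝ)
    (hmax : ∀ u ∈ Set.Icc (0:ℝ) 1, Mr u ≤ Mstar)
    (hMstar_pos : 0 < Mstar)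
    (s : ℝ) (hs1 : -(σ / Mstar) < s) (hs2 : s ≤ 0) :
    IntegrableOn (fun u => (1 / u) * (1 - σ / (σ + s * Mr u))) (Set.Ioc (0:ℝ) 1) := by
  have hc : 0 < σ + s * Mstar := by
    have h1 : -σ < s * Mstar := by
      rw [← neg_div] at hs1
      exact (div_lt_iff₀ hMstar_pos).mp hs1
    linarith
  have hD : ∀ u ∈ Set.Icc (0:ℝ) 1, 0 < σ + s * Mr u ∧ σ + s * Mstar ≤ σ + s * Mr u := by
    intro u hu
    have h2 : s * Mstar ≤ s * Mr u := by nlinarith [hmax u hu]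
    exact ⟨by linarith, by linarith⟩
  have hmeas : AEStronglyMeasurable (fun u => (1 / u) * (1 - σ / (σ + s * Mr u)))
      (volume.restrict (Set.Ioc (0:ℝ) 1)) := by
    apply ContinuousOn.aestronglyMeasurable _ measurableSet_Ioc
    apply ContinuousOn.mul
    · exact continuousOn_const.div continuousOn_id fun u hu => ne_of_gt hu.1
    · apply continuousOn_const.sub
      apply ContinuousOn.div continuousOn_const
      · exact continuousOn_const.add
          (continuousOn_const.mul (hMr_cont.mono Set.Ioc_subset_Icc_self))
      · intro u hu
        exact ne_of_gt (hD u (Set.Ioc_subset_Icc_self hu)).1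
  apply Integrable.mono' (hMr_int.const_mul (|s| / (σ + s * Mstar))) hmeas
  rw [ae_restrict_iff' measurableSet_Ioc]
  refine ae_of_all _ fun u hu => ?_
  obtain ⟨hD1, hD2⟩ := hD u (Set.Ioc_subset_Icc_self hu)
  have hu0 : 0 < u := hu.1
  have hMru : 0 ≤ Mr u := hMr_nonneg u (Set.Ioc_subset_Icc_self hu)
  have h1 : 1 - σ / (σ + s * Mr u) = s * Mr u / (σ + s * Mr u) := by
    field_simp
    ring
  rw [Real.norm_eq_abs, h1, abs_mul,
    abs_of_pos (by positivity : (0:ℝ) < 1 / u),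
    abs_div, abs_mul, abs_of_pos hD1, abs_of_nonneg hMru]
  have key : (1 / u) * (|s| * Mr u / (σ + s * Mr u))
      ≤ (1 / u) * (|s| * Mr u / (σ + s * Mstar)) := by
    apply mul_le_mul_of_nonneg_left _ (by positivity)
    apply div_le_div_of_nonneg_left (by positivity) hc hD2
  calc (1 / u) * (|s| * Mr u / (σ + s * Mr u))
      ≤ (1 / u) * (|s| * Mr u / (σ + s * Mstar)) := key
    _ = |s| / (σ + s * Mstar) * (Mr u / u) := by ring

/-- **Divergence of the invariant Laplace transform at `−σ/M*`.**
With `I(s) := ∫_0^1 (1/u)·(1 − σ/(σ + s·M_r(u))) du`: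
(a) `I(s)` is finite for every `s ∈ (−σ/M*, 0]`, and
(b) `I(s) → −∞` as `s` decreases to `−σ/M*`. -/
theorem laplace_exponent_diverges
    (σ : ℝ) (hσ : 0 < σ)
    (Mr : ℝ → ℝ) (hMr_cont : ContinuousOn Mr (Set.Icc (0:ℝ) 1))
    (hMr_nonneg : ∀ u ∈ Set.Icc (0:ℝ) 1, 0 ≤ Mr u)
    (hMr_int : IntegrableOn (fun u => Mr u / u) (Set.Ioc (0:ℝ) 1))
    (Mstar ustar : ℝ) (hustar : ustar ∈ Set.Ioo (0:ℝ) 1)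
    (hmax_attained : Mr ustar = Mstar)
    (hmax : ∀ u ∈ Set.Icc (0:ℝ) 1, Mr u ≤ Mstar)
    (hMstar_pos : 0 < Mstar)
    (hdiff : DifferentiableAt ℝ Mr ustar) :
    (∀ s : ℝ, s ∈ Set.Ioc (-(σ / Mstar)) 0 →
      IntegrableOn (fun u => (1 / u) * (1 - σ / (σ + s * Mr u))) (Set.Ioc (0:ℝ) 1)) ∧
    Tendsto (fun s : ℝ => ∫ u in Set.Ioc (0:ℝ) 1, (1 / u) * (1 - σ / (σ + s * Mr u)))
      (𝓝[>] (-(σ / Mstar))) atBot := by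
  have parta := fun (s : ℝ) (hs : s ∈ Set.Ioc (-(σ / Mstar)) 0) =>
    laplace_part_a σ hσ Mr hMr_cont hMr_nonneg hMr_int Mstar hmax hMstar_pos s hs.1 hs.2
  refine ⟨parta, ?_⟩
  set s₀ : ℝ := -(σ / Mstar) with hs₀def
  have hs₀neg : s₀ < 0 := by
    rw [hs₀def]
    exact neg_lt_zero.mpr (by positivity)
  have hc0 : s₀ * Mstar = -σ := by
    rw [hs₀def]
    field_simp
  set K : ℝ := σ / Mstar with hKdef
  have hK : 0 < K := by rw [hKdef]; positivity
  have hKs₀ : s₀ = -K := by rw [hs₀def, hKdef]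
  clear_value s₀ K
  -- the derivative at ustar is zero
  have hloc : IsLocalMax Mr ustar := by
    filter_upwards [isOpen_Ioo.mem_nhds hustar] with u hu
    rw [hmax_attained]
    exact hmax u (Set.mem_Icc_of_Ioo hu)
  have hderiv0 : HasDerivAt Mr 0 ustar := by
    have hz := hloc.deriv_eq_zero
    have := hdiff.hasDerivAt
    rwa [hz] at this
  have hlittle := hasDerivAt_iff_isLittleO.mp hderiv0
  simp only [smul_zero, sub_zero] at hlittle
  have hev := hlittle.def one_pos
  rw [Metric.eventually_nhds_iff] at hev
  obtain ⟨ε, hε, hev⟩ := hev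
  -- choose a radius r
  set r : ℝ := min (ε / 2) (min ((1 - ustar) / 2) (Mstar / 2)) with hrdef
  have hr : 0 < r := by
    rw [hrdef]
    exact lt_min (by linarith) (lt_min (by linarith [hustar.2]) (by linarith))
  have hrε : r < ε := by
    rw [hrdef]
    exact lt_of_le_of_lt (min_le_left _ _) (by linarith)
  have hr1 : ustar + r ≤ 1 := by
    have hru : r ≤ (1 - ustar) / 2 := by
      rw [hrdef]
      exact le_trans (min_le_right _ _) (min_le_left _ _)
    linarith
  have hrM : r ≤ Mstar / 2 := by
    rw [hrdef]
    exact le_trans (min_le_right _ _) (min_le_right _ _)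
  clear_value r
  -- properties of points in J = Ioc ustar (ustar + r)
  have hJsub : Set.Ioc ustar (ustar + r) ⊆ Set.Ioc (0:ℝ) 1 :=
    Set.Ioc_subset_Ioc hustar.1.le hr1
  have hJfacts : ∀ u ∈ Set.Ioc ustar (ustar + r),
      Mstar - Mr u ≤ u - ustar ∧ Mstar / 2 ≤ Mr u := by
    intro u hu
    have hd : dist u ustar < ε := by
      rw [Real.dist_eq, abs_of_pos (by linarith [hu.1])]
      linarith [hu.2, hrε]
    have h1 := hev hd
    rw [Real.norm_eq_abs, Real.norm_eq_abs, hmax_attained, one_mul,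
      abs_of_pos (by linarith [hu.1] : (0:ℝ) < u - ustar)] at h1
    have h2 : Mstar - Mr u ≤ u - ustar := by
      have := abs_le.mp h1
      linarith [this.1]
    refine ⟨h2, ?_⟩
    have : u - ustar ≤ r := by linarith [hu.2]
    linarith
  -- the comparison function
  set A : ℝ := σ / 4 * K⁻¹ with hAdef
  have hA : 0 < A := by rw [hAdef]; positivity
  clear_value A
  set φ : ℝ → ℝ := fun s =>
    A * (Real.log (σ + s * Mstar) - Real.log (σ + s * Mstar + K * r)) with hφdef
  clear_value φ
  have hmem : Set.Ioo s₀ (s₀ / 2) ∈ 𝓝[>] s₀ :=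
    Ioo_mem_nhdsGT_of_mem ⟨le_refl s₀, by linarith⟩
  -- Claim 1 : eventual bound
  have claim1 : ∀ s ∈ Set.Ioo s₀ (s₀ / 2),
      (∫ u in Set.Ioc (0:ℝ) 1, (1 / u) * (1 - σ / (σ + s * Mr u))) ≤ φ s := by
    intro s hs
    have hs1 : s₀ < s := hs.1
    have hs2 : s ≤ 0 := by linarith [hs.2]
    have hsIoc : s ∈ Set.Ioc s₀ 0 := ⟨hs1, hs2⟩
    have hc : 0 < σ + s * Mstar := by
      have h1 := mul_lt_mul_of_pos_right hs1 hMstar_pos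
      rw [hc0] at h1
      linarith
    have hDpos : ∀ u ∈ Set.Icc (0:ℝ) 1, 0 < σ + s * Mr u := by
      intro u hu
      have h2 : s * Mstar ≤ s * Mr u := by nlinarith [hmax u hu]
      linarith
    have hfint := parta s hsIoc
    have hfnonpos : ∀ u ∈ Set.Ioc (0:ℝ) 1,
        (1 / u) * (1 - σ / (σ + s * Mr u)) ≤ 0 := by
      intro u hu
      have hD1 := hDpos u (Set.Ioc_subset_Icc_self hu)
      have hDσ : σ + s * Mr u ≤ σ := by
        nlinarith [hMr_nonneg u (Set.Ioc_subset_Icc_self hu)]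
      have h1 : 1 ≤ σ / (σ + s * Mr u) := by
        rw [le_div_iff₀ hD1]; linarith
      have h2 : (0:ℝ) < 1 / u := one_div_pos.mpr hu.1
      nlinarith
    -- step 1: shrink the domain
    have step1 : (∫ u in Set.Ioc (0:ℝ) 1, (1 / u) * (1 - σ / (σ + s * Mr u)))
        ≤ ∫ u in Set.Ioc ustar (ustar + r), (1 / u) * (1 - σ / (σ + s * Mr u)) := by
      have hneg : (∫ u in Set.Ioc ustar (ustar + r), -((1 / u) * (1 - σ / (σ + s * Mr u))))
          ≤ ∫ u in Set.Ioc (0:ℝ) 1, -((1 / u) * (1 - σ / (σ + s * Mr u))) := by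
        apply setIntegral_mono_set hfint.neg
        · filter_upwards [ae_restrict_mem measurableSet_Ioc] with u hu
          exact neg_nonneg.mpr (hfnonpos u hu)
        · exact ae_of_all _ fun u hu => hJsub hu
      rw [integral_neg, integral_neg] at hneg
      linarith
    -- step 2: pointwise comparison on J
    have hgcont : ContinuousOn (fun u => -(σ / 4) * (σ + s * Mstar + K * (u - ustar))⁻¹)
        (Set.Icc ustar (ustar + r)) := by
      apply continuousOn_const.mul
      apply ContinuousOn.inv₀
      · fun_prop
      · intro u hu
        have h1 : 0 ≤ u - ustar := by linarith [hu.1]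
        have h2 : 0 ≤ K * (u - ustar) := mul_nonneg hK.le h1
        exact ne_of_gt (by linarith)
    have hgint : IntegrableOn (fun u => -(σ / 4) * (σ + s * Mstar + K * (u - ustar))⁻¹)
        (Set.Ioc ustar (ustar + r)) :=
      (hgcont.integrableOn_Icc).mono_set Set.Ioc_subset_Icc_self
    have hptwise : ∀ u ∈ Set.Ioc ustar (ustar + r),
        (1 / u) * (1 - σ / (σ + s * Mr u))
          ≤ -(σ / 4) * (σ + s * Mstar + K * (u - ustar))⁻¹ := by
      intro u hu
      obtain ⟨hd1, hd2⟩ := hJfacts u hu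
      have huIcc := hJsub hu
      have hu0 : 0 < u := huIcc.1
      have hu1 : u ≤ 1 := huIcc.2
      have hD1 := hDpos u (Set.Ioc_subset_Icc_self huIcc)
      have huu : 0 < u - ustar := by linarith [hu.1]
      have hβpos : 0 < σ + s * Mstar + K * (u - ustar) := by
        have h2 : 0 < K * (u - ustar) := mul_pos hK huu
        linarith
      have hDle : σ + s * Mr u ≤ σ + s * Mstar + K * (u - ustar) := by
        have hsK : -s ≤ K := by rw [hKs₀] at hs1; linarith
        have hms : 0 ≤ Mstar - Mr u := by
          have := hmax u (Set.Ioc_subset_Icc_self huIcc); linarith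
        nlinarith
      have hnum : s * Mr u ≤ -(σ / 4) := by
        have h4 : s * Mr u ≤ s * (Mstar / 2) := by nlinarith
        have h5 : s * (Mstar / 2) ≤ s₀ / 2 * (Mstar / 2) := by
          nlinarith [hs.2]
        nlinarith [hc0]
      have hfu : (1 / u) * (1 - σ / (σ + s * Mr u))
          = (1 / u) * (s * Mr u / (σ + s * Mr u)) := by
        congr 1
        field_simp
        ring
      have hstep : (1 / u) * (1 - σ / (σ + s * Mr u)) ≤ s * Mr u / (σ + s * Mr u) := by
        rw [hfu]
        have h1u : 1 ≤ 1 / u := by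
          rw [le_div_iff₀ hu0]; linarith
        have hneg : s * Mr u / (σ + s * Mr u) ≤ 0 :=
          div_nonpos_of_nonpos_of_nonneg (by nlinarith [hMr_nonneg u (Set.Ioc_subset_Icc_self huIcc)]) hD1.le
        nlinarith
      have hstep2 : s * Mr u / (σ + s * Mr u) ≤ -(σ / 4) / (σ + s * Mr u) :=
        (div_le_div_iff_of_pos_right hD1).mpr hnum
      have hstep3 : -(σ / 4) / (σ + s * Mr u)
          ≤ -(σ / 4) * (σ + s * Mstar + K * (u - ustar))⁻¹ := by
        have hinv : (σ + s * Mstar + K * (u - ustar))⁻¹ ≤ (σ + s * Mr u)⁻¹ :=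
          inv_anti₀ hD1 hDle
        rw [div_eq_mul_inv]
        nlinarith
      linarith
    have step2 : (∫ u in Set.Ioc ustar (ustar + r), (1 / u) * (1 - σ / (σ + s * Mr u)))
        ≤ ∫ u in Set.Ioc ustar (ustar + r),
            -(σ / 4) * (σ + s * Mstar + K * (u - ustar))⁻¹ :=
      setIntegral_mono_on (hfint.mono_set hJsub) hgint measurableSet_Ioc hptwise
    -- step 3: compute the integral of the comparison function
    have hle : ustar ≤ ustar + r := by linarith
    have heq : (∫ u in Set.Ioc ustar (ustar + r),
        -(σ / 4) * (σ + s * Mstar + K * (u - ustar))⁻¹) = φ s := by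
      rw [← intervalIntegral.integral_of_le hle]
      have hF : ∀ x ∈ Set.uIcc ustar (ustar + r),
          HasDerivAt (fun u => -(σ / 4) * K⁻¹ * Real.log (σ + s * Mstar + K * (u - ustar)))
            (-(σ / 4) * (σ + s * Mstar + K * (x - ustar))⁻¹) x := by
        intro x hx
        rw [Set.uIcc_of_le hle] at hx
        have hx1 : 0 ≤ x - ustar := by linarith [hx.1]
        have hx2 : 0 ≤ K * (x - ustar) := mul_nonneg hK.le hx1
        have hβ : 0 < σ + s * Mstar + K * (x - ustar) := by linarith
        have hinner : HasDerivAt (fun u => σ + s * Mstar + K * (u - ustar)) K x := by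
          simpa using (((hasDerivAt_id x).sub_const ustar).const_mul K).const_add (σ + s * Mstar)
        have hlog := (Real.hasDerivAt_log (ne_of_gt hβ)).comp x hinner
        have hres := hlog.const_mul (-(σ / 4) * K⁻¹)
        have hval : -(σ / 4) * K⁻¹ * ((σ + s * Mstar + K * (x - ustar))⁻¹ * K)
            = -(σ / 4) * (σ + s * Mstar + K * (x - ustar))⁻¹ := by
          field_simp
        rw [hval] at hres
        simpa [Function.comp] using hres
      have hgint2 : IntervalIntegrable
          (fun u => -(σ / 4) * (σ + s * Mstar + K * (u - ustar))⁻¹) volume ustar (ustar + r) := by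
        apply ContinuousOn.intervalIntegrable
        rwa [Set.uIcc_of_le hle]
      rw [intervalIntegral.integral_eq_sub_of_hasDerivAt hF hgint2]
      have h1 : ustar + r - ustar = r := by ring
      have h2 : K * (ustar - ustar) = 0 := by ring
      rw [h1, h2, add_zero, hφdef, hAdef]
      ring
    calc (∫ u in Set.Ioc (0:ℝ) 1, (1 / u) * (1 - σ / (σ + s * Mr u)))
        ≤ ∫ u in Set.Ioc ustar (ustar + r), (1 / u) * (1 - σ / (σ + s * Mr u)) := step1
      _ ≤ ∫ u in Set.Ioc ustar (ustar + r),
            -(σ / 4) * (σ + s * Mstar + K * (u - ustar))⁻¹ := step2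
      _ = φ s := heq
  -- Claim 2 : φ tends to atBot
  have hcs : Tendsto (fun s => σ + s * Mstar) (𝓝[>] s₀) (𝓝[>] 0) := by
    apply tendsto_nhdsWithin_of_tendsto_nhds_of_eventually_within
    · have hcont : Continuous fun s : ℝ => σ + s * Mstar := by continuity
      have h0 : σ + s₀ * Mstar = 0 := by rw [hc0]; ring
      have h3 := hcont.tendsto s₀
      rw [h0] at h3
      exact h3.mono_left nhdsWithin_le_nhds
    · filter_upwards [self_mem_nhdsWithin] with s hs
      have h1 := mul_lt_mul_of_pos_right (hs : s₀ < s) hMstar_pos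
      rw [hc0] at h1
      exact Set.mem_Ioi.mpr (by linarith)
  have hL1 : Tendsto (fun s => Real.log (σ + s * Mstar)) (𝓝[>] s₀) atBot :=
    Real.tendsto_log_nhdsGT_zero.comp hcs
  have hL2 : Tendsto (fun s => Real.log (σ + s * Mstar + K * r)) (𝓝[>] s₀)
      (𝓝 (Real.log (K * r))) := by
    have h1 : Tendsto (fun s => σ + s * Mstar + K * r) (𝓝[>] s₀) (𝓝 (K * r)) := by
      have h2 := (hcs.mono_right nhdsWithin_le_nhds).add_const (K * r)
      simpa using h2
    exact ((Real.continuousAt_log (by positivity : K * r ≠ 0)).tendsto).comp h1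
  have hev2 : ∀ᶠ s in 𝓝[>] s₀, Real.log (K * r) - 1 < Real.log (σ + s * Mstar + K * r) :=
    hL2.eventually (eventually_gt_nhds (by linarith))
  have hψ : Tendsto (fun s => A * (Real.log (σ + s * Mstar) - (Real.log (K * r) - 1)))
      (𝓝[>] s₀) atBot := by
    have h1 := tendsto_atBot_add_const_right _ (-(Real.log (K * r) - 1)) hL1
    have h2 := h1.const_mul_atBot hA
    simpa [sub_eq_add_neg] using h2
  have hφtend : Tendsto φ (𝓝[>] s₀) atBot := by
    apply tendsto_atBot_mono' _ _ hψ
    filter_upwards [hev2] with s hs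
    simp only [hφdef]
    nlinarith [mul_pos hA (sub_pos.mpr hs)]
  apply tendsto_atBot_mono' _ _ hφtend
  filter_upwards [hmem] with s hs
  exact claim1 s hs

end
end

section
/- Let a_1,…,a_n > 0 and define M_e(u) := Σ_{i=1}^n H_i·a_i·(m_e(u))_i for u ∈ (0,1] and e ∈ {1,…,n}. Then for every e ∈ {1,…,n}: (a) M_e(u) ≥ 0 for all u ∈ (0,1]; (b) M_e(1) = 0; and (c) lim_{u→0+} M_e(u) = 0. -/
open MeasureTheory Matrix Filter Topology

noncomputable section

section Aux

open NormedSpace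
open scoped Nat

attribute [local instance] Matrix.linftyOpNormedAddCommGroup Matrix.linftyOpNormedRing
  Matrix.linftyOpNormedAlgebra

variable {m : Type*} [Fintype m] [DecidableEq m]

lemma pow_entry_nonneg' {B : Matrix m m ℝ} (hB : ∀ i j, 0 ≤ B i j) :
    ∀ (k : ℕ) (i j : m), 0 ≤ (B ^ k) i j := by
  intro k
  induction k with
  | zero => intro i j; rw [pow_zero]; by_cases h : i = j <;>
      simp [Matrix.one_apply, h]
  | succ k ih =>
    intro i j
    rw [pow_succ, Matrix.mul_apply]
    exact Finset.sum_nonneg fun l _ => mul_nonneg (ih i l) (hB l j)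

lemma exp_entry_nonneg' {B : Matrix m m ℝ} (hB : ∀ i j, 0 ≤ B i j) (i j : m) :
    0 ≤ exp B i j := by
  have hsum : Summable fun k : ℕ => (k !⁻¹ : ℝ) • B ^ k := expSeries_summable' (𝕂 := ℝ) B
  let L : Matrix m m ℝ →ₗ[ℝ] ℝ :=
    { toFun := fun A => A i j, map_add' := fun A B => rfl, map_smul' := fun c A => rfl }
  have hL : Continuous L := LinearMap.continuous_of_finiteDimensional L
  have : exp B i j = ∑' k : ℕ, L ((k !⁻¹ : ℝ) • B ^ k) := by
    rw [exp_eq_tsum ℝ]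
    exact (hsum.hasSum.mapL ⟨L, hL⟩).tsum_eq.symm
  rw [this]
  refine tsum_nonneg fun k => ?_
  simp only [L, LinearMap.coe_mk, AddHom.coe_mk, Matrix.smul_apply, smul_eq_mul]
  exact mul_nonneg (by positivity) (pow_entry_nonneg' hB k i j)

lemma exp_smul_metzler_nonneg' {B : Matrix m m ℝ} (hB : ∀ i j, i ≠ j → 0 ≤ B i j)
    {t : ℝ} (ht : 0 ≤ t) (i j : m) : 0 ≤ exp (t • B) i j := by
  set γ : ℝ := ∑ l, |B l l| with hγ
  have hγ0 : 0 ≤ γ := Finset.sum_nonneg fun l _ => abs_nonneg _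
  have hBγ : ∀ i j, 0 ≤ (B + γ • 1) i j := by
    intro i j
    by_cases h : i = j
    · subst h
      simp only [Matrix.add_apply, Matrix.smul_apply, Matrix.one_apply_eq, smul_eq_mul, mul_one]
      have : |B i i| ≤ γ := Finset.single_le_sum (f := fun l => |B l l|)
        (fun l _ => abs_nonneg _) (Finset.mem_univ i)
      linarith [neg_abs_le (B i i)]
    · simpa [Matrix.add_apply, Matrix.one_apply_ne h] using hB i j h
  have hcomm : Commute (t • B) ((t * γ) • (1 : Matrix m m ℝ)) :=
    (Commute.one_right (t • B)).smul_right _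
  have key : exp (t • (B + γ • 1)) = exp (t • B) * exp ((t * γ) • 1) := by
    rw [← Matrix.exp_add_of_commute _ _ hcomm]
    congr 1
    rw [smul_add, smul_smul]
  have hexp1 : exp ((t * γ) • (1 : Matrix m m ℝ)) = Real.exp (t * γ) • 1 := by
    rw [← Algebra.algebraMap_eq_smul_one]
    erw [← algebraMap_exp_comm]
    rw [← Real.exp_eq_exp_ℝ, Algebra.algebraMap_eq_smul_one]
  have hkey2 : exp (t • B) = Real.exp (-(t * γ)) • exp (t • (B + γ • 1)) := by
    rw [key, hexp1, mul_smul_comm, mul_one, smul_smul, Real.exp_neg,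
      inv_mul_cancel₀ (Real.exp_ne_zero _), one_smul]
  rw [hkey2]
  have h1 : ∀ i j, 0 ≤ (t • (B + γ • 1)) i j := fun i j => mul_nonneg ht (hBγ i j)
  simpa using mul_nonneg (Real.exp_pos _).le (exp_entry_nonneg' h1 i j)

lemma exp_entry_le_of_lyapunov' {N : Matrix m m ℝ} (hN : ∀ i j, i ≠ j → 0 ≤ N i j)
    {c : m → ℝ} (hc : ∀ j, 0 < c j) {δ : ℝ}
    (hNc : ∀ j, (N *ᵥ c) j ≤ -δ * c j) {t : ℝ} (ht : 0 ≤ t) (j l : m) :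
    exp (t • N) j l ≤ (c j / c l) * Real.exp (-δ * t) := by
  classical
  set x : ℝ → ℝ := fun s => (exp (s • N) *ᵥ c) j with hxdef
  let L : Matrix m m ℝ →ₗ[ℝ] ℝ :=
    { toFun := fun A => (A *ᵥ c) j,
      map_add' := fun A B => by simp [Matrix.add_mulVec, Pi.add_apply]
      map_smul' := fun r A => by simp [Matrix.smul_mulVec] }
  have hx : ∀ s : ℝ, HasDerivAt x ((exp (s • N) *ᵥ (N *ᵥ c)) j) s := by
    intro s
    have h1 : HasDerivAt (fun u : ℝ => exp (u • N)) (exp (s • N) * N) s :=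
      hasDerivAt_exp_smul_const N s
    have h2 := (LinearMap.toContinuousLinearMap L).hasFDerivAt.comp_hasDerivAt s h1
    have h3 : (exp (s • N) *ᵥ (N *ᵥ c)) j = L (exp (s • N) * N) := by
      simp only [L, LinearMap.coe_mk, AddHom.coe_mk, Matrix.mulVec_mulVec]
    rw [h3]
    exact h2
  have hexpnn : ∀ s : ℝ, 0 ≤ s → ∀ k, 0 ≤ exp (s • N) j k := fun s hs k =>
    exp_smul_metzler_nonneg' hN hs j k
  have hder_le : ∀ s : ℝ, 0 ≤ s → (exp (s • N) *ᵥ (N *ᵥ c)) j ≤ -δ * x s := by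
    intro s hs
    have h4 : ∀ k, exp (s • N) j k * (N *ᵥ c) k ≤ exp (s • N) j k * (-δ * c k) :=
      fun k => mul_le_mul_of_nonneg_left (hNc k) (hexpnn s hs k)
    calc (exp (s • N) *ᵥ (N *ᵥ c)) j = ∑ k, exp (s • N) j k * (N *ᵥ c) k := rfl
      _ ≤ ∑ k, exp (s • N) j k * (-δ * c k) := Finset.sum_le_sum fun k _ => h4 k
      _ = -δ * ∑ k, exp (s • N) j k * c k := by rw [Finset.mul_sum]; congr 1; ext k; ring
      _ = -δ * x s := rfl
  set ph : ℝ → ℝ := fun s => Real.exp (δ * s) * x s with hphdef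
  have hph : ∀ s : ℝ, HasDerivAt ph
      (Real.exp (δ * s) * δ * x s + Real.exp (δ * s) * ((exp (s • N) *ᵥ (N *ᵥ c)) j)) s := by
    intro s
    have hlin : HasDerivAt (fun u : ℝ => δ * u) δ s := by
      simpa using (hasDerivAt_id s).const_mul δ
    exact (hlin.exp).mul (hx s)
  have hanti : AntitoneOn ph (Set.Ici (0:ℝ)) := by
    apply antitoneOn_of_deriv_nonpos (convex_Ici 0)
    · exact fun s _ => (hph s).continuousAt.continuousWithinAt
    · exact fun s hs => (hph s).differentiableAt.differentiableWithinAt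
    · intro s hs
      rw [interior_Ici] at hs
      rw [(hph s).deriv]
      have h1 := hder_le s (le_of_lt hs)
      have h2 : 0 ≤ Real.exp (δ * s) := (Real.exp_pos _).le
      nlinarith
  have hx0 : x 0 = c j := by
    simp [hxdef, Matrix.one_mulVec]
  have hpht : ph t ≤ ph 0 := hanti (Set.self_mem_Ici) ht ht
  have hxt : x t ≤ c j * Real.exp (-δ * t) := by
    have h0 : ph 0 = c j := by simp [hphdef, hx0]
    have h1 : Real.exp (δ * t) * x t ≤ c j := by rw [← h0]; exact hpht
    have h2 : Real.exp (-δ * t) = (Real.exp (δ * t))⁻¹ := by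
      rw [← Real.exp_neg]; ring_nf
    rw [h2, ← div_eq_mul_inv, le_div_iff₀ (Real.exp_pos _)]
    linarith [mul_comm (Real.exp (δ * t)) (x t)]
  have hentry : exp (t • N) j l * c l ≤ x t := by
    have hterms : ∀ k ∈ Finset.univ, (0:ℝ) ≤ exp (t • N) j k * c k :=
      fun k _ => mul_nonneg (hexpnn t ht k) (hc k).le
    exact Finset.single_le_sum hterms (Finset.mem_univ l)
  calc exp (t • N) j l ≤ x t / c l := (le_div_iff₀ (hc l)).mpr hentry
    _ ≤ (c j * Real.exp (-δ * t)) / c l := by gcongr; exact (hc l).le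
    _ = (c j / c l) * Real.exp (-δ * t) := by ring

end Aux

/-- Lyapunov weight vector, built by recursion up the network. -/
def pvec {n : ℕ} (Λ : Matrix (Fin n) (Fin n) ℝ) (K : Fin n → ℝ) (e : Fin n) : ℝ :=
  (1 + ∑ i ∈ (Finset.Iio e).attach, (-Λ i.1 e) * K i.1 * pvec Λ K i.1) / K e
termination_by e.1
decreasing_by exact Fin.lt_def.mp (Finset.mem_Iio.mp i.2)

section Pvec

variable {n : ℕ} {Λ : Matrix (Fin n) (Fin n) ℝ} {K : Fin n → ℝ}

lemma pvec_pos (hΛoff : ∀ i j : Fin n, i ≠ j → Λ i j ≤ 0) (hK : ∀ i, 0 < K i)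
    (e : Fin n) : 0 < pvec Λ K e := by
  rw [pvec]
  apply div_pos _ (hK e)
  have h : 0 ≤ ∑ i ∈ (Finset.Iio e).attach, (-Λ i.1 e) * K i.1 * pvec Λ K i.1 := by
    refine Finset.sum_nonneg fun i _ => ?_
    have hilt : i.1 < e := Finset.mem_Iio.mp i.2
    exact mul_nonneg (mul_nonneg (neg_nonneg.mpr (hΛoff i.1 e hilt.ne)) (hK i.1).le)
      (pvec_pos hΛoff hK i.1).le
  linarith
termination_by e.1
decreasing_by exact Fin.lt_def.mp (Finset.mem_Iio.mp i.2)

lemma sum_KΛ_pvec (hΛdiag : ∀ i, Λ i i = 1)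
    (hΛupper : ∀ i j : Fin n, j < i → Λ i j = 0) (hK : ∀ i, 0 < K i) (e : Fin n) :
    ∑ i, K i * Λ i e * pvec Λ K i = 1 := by
  classical
  have hzero : ∀ i ∈ Finset.univ, i ∉ Finset.Iic e → K i * Λ i e * pvec Λ K i = 0 := by
    intro i _ hi
    have h : e < i := by simpa [Finset.mem_Iic, not_le] using hi
    rw [hΛupper i e h, mul_zero, zero_mul]
  rw [← Finset.sum_subset (Finset.subset_univ (Finset.Iic e)) hzero]
  have hIic : Finset.Iic e = insert e (Finset.Iio e) := by
    ext i; simp [Finset.mem_Iic, Finset.mem_Iio, le_iff_lt_or_eq, or_comm]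
  rw [hIic, Finset.sum_insert (by simp)]
  rw [hΛdiag e, mul_one]
  have hdef : pvec Λ K e * K e = 1 + ∑ i ∈ Finset.Iio e, (-Λ i e) * K i * pvec Λ K i := by
    rw [pvec, div_mul_cancel₀ _ (hK e).ne',
      Finset.sum_attach (Finset.Iio e) (fun i => (-Λ i e) * K i * pvec Λ K i)]
  have h2 : ∑ i ∈ Finset.Iio e, K i * Λ i e * pvec Λ K i
      = - ∑ i ∈ Finset.Iio e, (-Λ i e) * K i * pvec Λ K i := by
    rw [← Finset.sum_neg_distrib]
    exact Finset.sum_congr rfl fun i _ => by ring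
  have h3 : K e * pvec Λ K e = pvec Λ K e * K e := mul_comm _ _
  rw [h2, h3, hdef]
  ring

end Pvec

section Drift

variable {n : ℕ} (Λ : Matrix (Fin n) (Fin n) ℝ) (K H : Fin n → ℝ)

lemma driftM_transpose_metzler (hΛoff : ∀ i j : Fin n, i ≠ j → Λ i j ≤ 0)
    (hK : ∀ i, 0 < K i) (hH : ∀ i, 0 < H i) :
    ∀ i j, i ≠ j → 0 ≤ (driftM Λ K H)ᵀ i j := by
  intro i j hij
  rw [Matrix.transpose_apply]
  rcases i with a | a <;> rcases j with b | b
  · have hba : b ≠ a := fun h => hij (by rw [h])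
    have h1 : driftM Λ K H (Sum.inl b) (Sum.inl a) = -(K b * Λ b a) := by
      simp [driftM, Matrix.diagonal_mul]
    rw [h1]
    have := hΛoff b a hba
    nlinarith [hK b]
  · have h1 : driftM Λ K H (Sum.inr b) (Sum.inl a) = 0 := by
      simp [driftM]
    rw [h1]
  · have h1 : driftM Λ K H (Sum.inl b) (Sum.inr a) = Matrix.diagonal K b a := by
      simp [driftM]
    rw [h1]
    rcases eq_or_ne b a with h | h
    · rw [h, Matrix.diagonal_apply_eq]; exact (hK a).le
    · rw [Matrix.diagonal_apply_ne _ h]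
  · have hba : b ≠ a := fun h => hij (by rw [h])
    have h1 : driftM Λ K H (Sum.inr b) (Sum.inr a) = 0 := by
      simp [driftM, Matrix.diagonal_apply_ne _ hba]
    rw [h1]

lemma driftM_lyapunov (hn : 0 < n) (hΛdiag : ∀ i, Λ i i = 1)
    (hΛupper : ∀ i j : Fin n, j < i → Λ i j = 0)
    (hΛoff : ∀ i j : Fin n, i ≠ j → Λ i j ≤ 0)
    (hK : ∀ i, 0 < K i) (hH : ∀ i, 0 < H i) :
    ∃ (c : Fin n ⊕ Fin n → ℝ) (δ : ℝ), (∀ j, 0 < c j) ∧ 0 < δ ∧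
      ∀ j, ((driftM Λ K H)ᵀ *ᵥ c) j ≤ -δ * c j := by
  classical
  have : Nonempty (Fin n) := ⟨⟨0, hn⟩⟩
  set p : Fin n → ℝ := pvec Λ K with hp
  have hppos : ∀ e, 0 < p e := pvec_pos hΛoff hK
  set q : Fin n → ℝ := fun e => 2 * K e * p e / H e with hq
  have hqpos : ∀ e, 0 < q e := fun e => by
    have := hppos e
    have := hK e
    have := hH e
    positivity
  set c : Fin n ⊕ Fin n → ℝ := Sum.elim p q with hc
  set δ : ℝ := Finset.univ.inf' Finset.univ_nonempty (fun e => min (1 / p e) (H e / 2)) with hδ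
  have hδpos : 0 < δ := by
    rw [hδ, Finset.lt_inf'_iff]
    intro e _
    have h1 := hppos e
    have h2 := hH e
    exact lt_min (by positivity) (by positivity)
  have hδle1 : ∀ e, δ ≤ 1 / p e := fun e =>
    le_trans (Finset.inf'_le _ (Finset.mem_univ e)) (min_le_left _ _)
  have hδle2 : ∀ e, δ ≤ H e / 2 := fun e =>
    le_trans (Finset.inf'_le _ (Finset.mem_univ e)) (min_le_right _ _)
  refine ⟨c, δ, ?_, hδpos, ?_⟩
  · intro j
    rcases j with e | e
    · simpa [hc] using hppos e
    · simpa [hc] using hqpos e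
  intro j
  have hmv : ((driftM Λ K H)ᵀ *ᵥ c) j = ∑ k, driftM Λ K H k j * c k := by
    rw [Matrix.mulVec]
    congr 1
  rcases j with e | e
  · have hcol : ∑ k, driftM Λ K H k (Sum.inl e) * c k
        = -(∑ a, K a * Λ a e * p a) := by
      rw [Fintype.sum_sum_type]
      have h1 : ∀ a, driftM Λ K H (Sum.inl a) (Sum.inl e) = -(K a * Λ a e) := by
        intro a; simp [driftM, Matrix.diagonal_mul]
      have h2 : ∀ a, driftM Λ K H (Sum.inr a) (Sum.inl e) = 0 := by
        intro a; simp [driftM]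
      simp only [h1, h2, zero_mul, Finset.sum_const_zero, add_zero, hc, Sum.elim_inl,
        Finset.sum_neg_distrib, neg_mul]
    rw [hmv, hcol, sum_KΛ_pvec hΛdiag hΛupper hK e]
    have h3 : δ * p e ≤ 1 := by
      have := hδle1 e
      rw [le_div_iff₀ (hppos e)] at this
      linarith
    simp only [hc, Sum.elim_inl]
    nlinarith
  · have hcol : ∑ k, driftM Λ K H k (Sum.inr e) * c k = K e * p e - H e * q e := by
      rw [Fintype.sum_sum_type]
      have h1 : ∀ a, driftM Λ K H (Sum.inl a) (Sum.inr e) = Matrix.diagonal K a e := by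
        intro a; simp [driftM]
      have h2 : ∀ a, driftM Λ K H (Sum.inr a) (Sum.inr e) = -(Matrix.diagonal H a e) := by
        intro a; simp [driftM, Matrix.diagonal_apply]; split <;> simp
      simp only [h1, h2, hc, Sum.elim_inl, Sum.elim_inr]
      rw [Finset.sum_eq_single e (fun b _ hb => by
          rw [Matrix.diagonal_apply_ne _ hb, zero_mul]) (by simp),
        Finset.sum_eq_single e (fun b _ hb => by
          rw [Matrix.diagonal_apply_ne _ hb, neg_zero, zero_mul]) (by simp)]
      rw [Matrix.diagonal_apply_eq, Matrix.diagonal_apply_eq]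
      ring
    rw [hmv, hcol]
    have hq2 : H e * q e = 2 * K e * p e := by
      have hHe : H e ≠ 0 := (hH e).ne'
      rw [hq]
      field_simp
    have h3 : δ * q e ≤ K e * p e := by
      have h4 := hδle2 e
      have h5 : q e * (H e / 2) = K e * p e := by
        have hHe : H e ≠ 0 := (hH e).ne'
        rw [hq]
        field_simp
      calc δ * q e ≤ (H e / 2) * q e :=
            mul_le_mul_of_nonneg_right h4 (hqpos e).le
        _ = K e * p e := by rw [mul_comm]; exact h5
    simp only [hc, Sum.elim_inr]
    nlinarith
end Drift

/-- **Behavior of the geomorphological kernels `M_e`.**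
With `M_e(u) = Σ_i H_i a_i (m_e(u))_i`, for every link `e`:
(a) `M_e(u) ≥ 0` on `(0,1]`; (b) `M_e(1) = 0`; (c) `M_e(u) → 0` as `u → 0⁺`. -/
theorem geomorph_kernel_nonneg_vanishes
    {n : ℕ} (hn : 0 < n) (Λ : Matrix (Fin n) (Fin n) ℝ) (K H : Fin n → ℝ)
    (hΛdiag : ∀ i, Λ i i = 1)
    (hΛupper : ∀ i j : Fin n, j < i → Λ i j = 0)
    (hΛoff : ∀ i j : Fin n, i ≠ j → Λ i j ≤ 0)
    (hΛinv : IsUnit Λ.det)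
    (hK : ∀ i, 0 < K i) (hH : ∀ i, 0 < H i)
    (a : Fin n → ℝ) (ha : ∀ i, 0 < a i) :
    ∀ e : Fin n,
      (∀ u ∈ Set.Ioc (0:ℝ) 1, 0 ≤ ∑ i, H i * a i * mVec hn Λ K H e u i) ∧
      (∑ i, H i * a i * mVec hn Λ K H e 1 i) = 0 ∧
      Tendsto (fun u : ℝ => ∑ i, H i * a i * mVec hn Λ K H e u i)
        (𝓝[>] (0:ℝ)) (𝓝 0) := by
  intro e
  have hmetz := driftM_transpose_metzler Λ K H hΛoff hK hH
  obtain ⟨c, δ, hc, hδ, hNc⟩ := driftM_lyapunov Λ K H hn hΛdiag hΛupper hΛoff hK hH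
  set H0 : ℝ := H ⟨0, hn⟩ with hH0
  have hH0pos : 0 < H0 := hH _
  have hm : ∀ u i, mVec hn Λ K H e u i
      = NormedSpace.exp ((-(Real.log u / H0)) • (driftM Λ K H)ᵀ)
        (Sum.inr i) (Sum.inl e) := fun u i => rfl
  have htnn : ∀ u : ℝ, 0 < u → u ≤ 1 → 0 ≤ -(Real.log u / H0) := by
    intro u hu0 hu1
    have hl : Real.log u ≤ 0 := Real.log_nonpos hu0.le hu1
    have : Real.log u / H0 ≤ 0 := div_nonpos_of_nonpos_of_nonneg hl hH0pos.le
    linarith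
  refine ⟨?_, ?_, ?_⟩
  · intro u hu
    refine Finset.sum_nonneg fun i _ => ?_
    have h0 := exp_smul_metzler_nonneg' hmetz (htnn u hu.1 hu.2) (Sum.inr i) (Sum.inl e)
    rw [hm]
    exact mul_nonneg (mul_nonneg (hH i).le (ha i).le) h0
  · refine Finset.sum_eq_zero fun i _ => ?_
    have h1 : mVec hn Λ K H e 1 i = 0 := by
      rw [hm, Real.log_one, zero_div, neg_zero, zero_smul, NormedSpace.exp_zero]
      exact Matrix.one_apply_ne (by simp)
    rw [h1, mul_zero]
  · have htend : Tendsto (fun u : ℝ => -(Real.log u / H0)) (𝓝[>] (0:ℝ)) atTop := by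
      have hlog : Tendsto Real.log (𝓝[>] (0:ℝ)) atBot :=
        Real.tendsto_log_nhdsGT_zero
      exact tendsto_neg_atBot_atTop.comp (hlog.atBot_div_const hH0pos)
    have hexp0 : Tendsto (fun u : ℝ => Real.exp (-δ * -(Real.log u / H0)))
        (𝓝[>] (0:ℝ)) (𝓝 0) := by
      apply Real.tendsto_exp_atBot.comp
      have hmul : Tendsto (fun s : ℝ => -δ * s) atTop atBot := by
        simpa [mul_comm] using tendsto_id.atTop_mul_const_of_neg' (neg_lt_zero.mpr hδ)
      exact hmul.comp htend
    set C : ℝ := ∑ i, H i * a i * (c (Sum.inr i) / c (Sum.inl e)) with hC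
    have hCexp : Tendsto (fun u : ℝ => C * Real.exp (-δ * -(Real.log u / H0)))
        (𝓝[>] (0:ℝ)) (𝓝 0) := by
      simpa using hexp0.const_mul C
    apply squeeze_zero' ?_ ?_ hCexp
    · filter_upwards [Ioo_mem_nhdsGT (zero_lt_one (α := ℝ))] with u hu
      refine Finset.sum_nonneg fun i _ => ?_
      have h0 := exp_smul_metzler_nonneg' hmetz (htnn u hu.1 hu.2.le) (Sum.inr i) (Sum.inl e)
      rw [hm]
      exact mul_nonneg (mul_nonneg (hH i).le (ha i).le) h0
    · filter_upwards [Ioo_mem_nhdsGT (zero_lt_one (α := ℝ))] with u hu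
      have ht := htnn u hu.1 hu.2.le
      have hle : ∀ i, mVec hn Λ K H e u i
          ≤ (c (Sum.inr i) / c (Sum.inl e)) * Real.exp (-δ * -(Real.log u / H0)) := by
        intro i
        rw [hm]
        exact exp_entry_le_of_lyapunov' hmetz hc hNc ht (Sum.inr i) (Sum.inl e)
      calc ∑ i, H i * a i * mVec hn Λ K H e u i
          ≤ ∑ i, H i * a i * ((c (Sum.inr i) / c (Sum.inl e))
              * Real.exp (-δ * -(Real.log u / H0))) := by
            refine Finset.sum_le_sum fun i _ => ?_
            exact mul_le_mul_of_nonneg_left (hle i)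
              (mul_nonneg (hH i).le (ha i).le)
        _ = C * Real.exp (-δ * -(Real.log u / H0)) := by
            rw [hC, Finset.sum_mul]
            exact Finset.sum_congr rfl fun i _ => by ring

end
end

section
/- Suppose K = κ·I and H = η·I with κ > 0, η > 0, set β := η/κ, and assume β ≠ 1 (so that Λ − β·I is invertible, Λ being upper triangular with all eigenvalues equal to 1). Then for every u ∈ (0,1], the lower-left n×n block m(u) of exp(−(log u/η)·Mᵀ), defined by m(u)_{i,e} = (exp(−(log u/η)·Mᵀ))_{n+i, e} for i, e ∈ {1,…,n}, satisfies m(u) = ( (Λ − β·I)^{−1}·( u·I − exp((log u/β)·Λ) ) )ᵀ. -/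
open Matrix

noncomputable section

/-- The ring homomorphism sending a pair of square matrices to the block-diagonal matrix. -/
def fromBlocksDiagHom (n : ℕ) :
    (Matrix (Fin n) (Fin n) ℝ × Matrix (Fin n) (Fin n) ℝ) →+*
      Matrix (Fin n ⊕ Fin n) (Fin n ⊕ Fin n) ℝ where
  toFun p := Matrix.fromBlocks p.1 0 0 p.2
  map_one' := by simp [Matrix.fromBlocks_one]
  map_mul' p q := by simp [Matrix.fromBlocks_multiply]
  map_zero' := by simp
  map_add' p q := by simp [Matrix.fromBlocks_add]

lemma continuous_fromBlocksDiagHom (n : ℕ) : Continuous (fromBlocksDiagHom n) := by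
  apply continuous_matrix
  rintro (i | i) (j | j)
  · exact Continuous.matrix_elem continuous_fst i j
  · exact continuous_const
  · exact continuous_const
  · exact Continuous.matrix_elem continuous_snd i j

lemma exp_fromBlocks_diag {n : ℕ} (P Q : Matrix (Fin n) (Fin n) ℝ) :
    NormedSpace.exp (Matrix.fromBlocks P 0 0 Q)
      = Matrix.fromBlocks (NormedSpace.exp P) 0 0 (NormedSpace.exp Q) := by
  letI : SeminormedRing (Matrix (Fin n) (Fin n) ℝ) := Matrix.linftyOpSemiNormedRing
  letI : NormedRing (Matrix (Fin n) (Fin n) ℝ) := Matrix.linftyOpNormedRing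
  letI : NormedAlgebra ℝ (Matrix (Fin n) (Fin n) ℝ) := Matrix.linftyOpNormedAlgebra
  letI : SeminormedRing (Matrix (Fin n ⊕ Fin n) (Fin n ⊕ Fin n) ℝ) :=
    Matrix.linftyOpSemiNormedRing
  letI : NormedRing (Matrix (Fin n ⊕ Fin n) (Fin n ⊕ Fin n) ℝ) := Matrix.linftyOpNormedRing
  letI : NormedAlgebra ℝ (Matrix (Fin n ⊕ Fin n) (Fin n ⊕ Fin n) ℝ) :=
    Matrix.linftyOpNormedAlgebra
  letI : NormedAlgebra ℚ (Matrix (Fin n) (Fin n) ℝ) :=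
    NormedAlgebra.restrictScalars ℚ ℝ (Matrix (Fin n) (Fin n) ℝ)
  have h := NormedSpace.map_exp (fromBlocksDiagHom n) (continuous_fromBlocksDiagHom n) (P, Q)
  have h1 : NormedSpace.exp ((P, Q) :
      Matrix (Fin n) (Fin n) ℝ × Matrix (Fin n) (Fin n) ℝ)
      = (NormedSpace.exp P, NormedSpace.exp Q) := by
    ext1
    · exact Prod.fst_exp (P, Q)
    · exact Prod.snd_exp (P, Q)
  erw [h1] at h
  exact h.symm

/-- **Closed form of the lower-left block in the spatially uniform case.** If `K = κ·I`
and `H = η·I` with `β := η/κ ≠ 1`, then for `u ∈ (0,1]` the lower-left `n×n` block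
`m(u)` of `exp(−(log u/η)·Mᵀ)` satisfies
`m(u) = ((Λ − β·I)⁻¹·(u·I − exp((log u/β)·Λ)))ᵀ`. -/
theorem lower_left_block_uniform
    {n : ℕ} (hn : 0 < n) (Λ : Matrix (Fin n) (Fin n) ℝ) (K H : Fin n → ℝ)
    (hΛdiag : ∀ i, Λ i i = 1)
    (hΛupper : ∀ i j : Fin n, j < i → Λ i j = 0)
    (hΛoff : ∀ i j : Fin n, i ≠ j → Λ i j ≤ 0)
    (hΛinv : IsUnit Λ.det)
    (κ η : ℝ) (hκ : 0 < κ) (hη : 0 < η)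
    (hKdef : ∀ i, K i = κ) (hHdef : ∀ i, H i = η)
    (hβ : η / κ ≠ 1) :
    ∀ u ∈ Set.Ioc (0:ℝ) 1, ∀ i e : Fin n,
      NormedSpace.exp ((-(Real.log u / η)) • (driftM Λ K H)ᵀ) (Sum.inr i) (Sum.inl e)
        = ((Λ - (η / κ) • (1 : Matrix (Fin n) (Fin n) ℝ))⁻¹ *
            (u • (1 : Matrix (Fin n) (Fin n) ℝ)
              - NormedSpace.exp ((Real.log u / (η / κ)) • Λ))) e i := by
  intro u hu i e
  obtain ⟨hu0, hu1⟩ := hu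
  have hκ' : κ ≠ 0 := hκ.ne'
  have hη' : η ≠ 0 := hη.ne'
  set β : ℝ := η / κ with hβdef
  have hβ0 : β ≠ 0 := div_ne_zero hη' hκ'
  set c : ℝ := Real.log u / β with hc
  have hcc : c = Real.log u * κ / η := by rw [hc, hβdef, div_div_eq_mul_div]
  have hcβ : c * β = Real.log u := by
    rw [hc, div_mul_cancel₀ _ hβ0]
  set lu : ℝ := Real.log u with hlu
  set L : Matrix (Fin n) (Fin n) ℝ := Λ - β • 1 with hLdef
  -- invertibility of L
  have hLtri : L.BlockTriangular id := by
    intro a b hab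
    have hab' : b < a := hab
    simp only [hLdef, Matrix.sub_apply, Matrix.smul_apply, Matrix.one_apply, smul_eq_mul]
    rw [hΛupper a b hab', if_neg (ne_of_gt hab')]
    ring
  have hLdet : IsUnit L.det := by
    rw [Matrix.det_of_upperTriangular hLtri]
    have hdiag : ∀ a : Fin n, L a a = 1 - β := by
      intro a
      simp [hLdef, Matrix.one_apply, hΛdiag a]
    rw [Finset.prod_congr rfl fun a _ => hdiag a, Finset.prod_const]
    exact IsUnit.pow _ (isUnit_iff_ne_zero.mpr (sub_ne_zero.mpr (fun h => hβ h.symm)))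
  set X : Matrix (Fin n) (Fin n) ℝ := L⁻¹ with hXdef
  have hLX : L * X = 1 := Matrix.mul_nonsing_inv _ hLdet
  have hXL : X * L = 1 := Matrix.nonsing_inv_mul _ hLdet
  -- the conjugating unit
  set S : Matrix (Fin n ⊕ Fin n) (Fin n ⊕ Fin n) ℝ := Matrix.fromBlocks 1 X 0 1 with hSdef
  set T : Matrix (Fin n ⊕ Fin n) (Fin n ⊕ Fin n) ℝ := Matrix.fromBlocks 1 (-X) 0 1 with hTdef
  have hST : S * T = 1 := by
    simp [hSdef, hTdef, Matrix.fromBlocks_multiply, ← Matrix.fromBlocks_one]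
  have hTS : T * S = 1 := by
    simp [hSdef, hTdef, Matrix.fromBlocks_multiply, ← Matrix.fromBlocks_one]
  set U : (Matrix (Fin n ⊕ Fin n) (Fin n ⊕ Fin n) ℝ)ˣ := ⟨S, T, hST, hTS⟩ with hUdef
  -- the diagonal matrices are scalar
  have hdiagK : Matrix.diagonal K = κ • (1 : Matrix (Fin n) (Fin n) ℝ) := by
    rw [show K = (fun _ => κ) from funext hKdef]
    exact (Matrix.smul_one_eq_diagonal κ).symm
  have hdiagH : Matrix.diagonal H = η • (1 : Matrix (Fin n) (Fin n) ℝ) := by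
    rw [show H = (fun _ => η) from funext hHdef]
    exact (Matrix.smul_one_eq_diagonal η).symm
  -- step 1: the scaled drift matrix in block form
  have hdrift : (-(lu / η)) • (driftM Λ K H)
      = Matrix.fromBlocks (c • Λ) ((-c) • 1) 0 (lu • 1) := by
    rw [driftM, hdiagK, hdiagH, Matrix.fromBlocks_smul, Matrix.fromBlocks_inj]
    refine ⟨?_, ?_, ?_, ?_⟩
    · rw [Matrix.smul_mul, Matrix.one_mul, hcc]
      match_scalars
      field_simp
    · rw [hcc]
      match_scalars
      field_simp
    · simp
    · rw [smul_neg, neg_smul, neg_neg, smul_smul, div_mul_cancel₀ _ hη']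
  -- step 2: conjugation to block-diagonal form
  have key : (-(lu / η)) • (driftM Λ K H)
      = S * (Matrix.fromBlocks (c • Λ) 0 0 (lu • 1)) * T := by
    rw [hdrift, hSdef, hTdef, Matrix.fromBlocks_multiply, Matrix.fromBlocks_multiply,
      Matrix.fromBlocks_inj]
    refine ⟨by simp, ?_, by simp, by simp⟩
    simp only [Matrix.one_mul, Matrix.mul_zero, Matrix.zero_mul, Matrix.mul_one, add_zero,
      zero_add]
    rw [Matrix.mul_smul, Matrix.mul_one, ← hcβ, ← hLX, hLdef, Matrix.sub_mul,
      Matrix.smul_mul, Matrix.one_mul, Matrix.smul_mul, Matrix.mul_neg]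
    module
  -- step 3: the exponential
  set E : Matrix (Fin n) (Fin n) ℝ := NormedSpace.exp (c • Λ) with hEdef
  have hexpd : NormedSpace.exp (lu • (1 : Matrix (Fin n) (Fin n) ℝ)) = u • 1 := by
    rw [Matrix.smul_one_eq_diagonal, Matrix.exp_diagonal, Matrix.smul_one_eq_diagonal]
    have hfn : (NormedSpace.exp fun _ : Fin n => lu) = fun _ => u := by
      funext a
      exact (Pi.coe_exp (fun _ : Fin n => lu) a).trans
        (by rw [← Real.exp_eq_exp_ℝ, hlu, Real.exp_log hu0])
    rw [hfn]
  have hexp : NormedSpace.exp ((-(lu / η)) • (driftM Λ K H))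
      = S * (Matrix.fromBlocks E 0 0 (u • 1)) * T := by
    have key' : (-(lu / η)) • (driftM Λ K H)
        = (U : Matrix (Fin n ⊕ Fin n) (Fin n ⊕ Fin n) ℝ)
            * (Matrix.fromBlocks (c • Λ) 0 0 (lu • 1))
            * ((U⁻¹ : (Matrix (Fin n ⊕ Fin n) (Fin n ⊕ Fin n) ℝ)ˣ) :
                Matrix (Fin n ⊕ Fin n) (Fin n ⊕ Fin n) ℝ) := key
    rw [key', Matrix.exp_units_conj, exp_fromBlocks_diag, hexpd]
    rfl
  -- step 4: commutation of X with E
  have hcomm : E * X = X * E := by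
    have h1 : Commute L (c • Λ) := by
      rw [hLdef]
      exact (((Commute.refl Λ).sub_left ((Commute.one_left Λ).smul_left β)).smul_right c)
    have h2 : Commute L E := by rw [hEdef]; exact h1.exp_right
    have h3 : L * E = E * L := h2.eq
    have h4 : L * (E * X) = E * (L * X) := by
      rw [← Matrix.mul_assoc, h3, Matrix.mul_assoc]
    calc E * X = (X * L) * (E * X) := by rw [hXL, Matrix.one_mul]
      _ = X * (L * (E * X)) := by rw [Matrix.mul_assoc]
      _ = X * (E * (L * X)) := by rw [h4]
      _ = X * E := by rw [hLX, Matrix.mul_one]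
  -- step 5: conclude
  have htrans : (-(lu / η)) • (driftM Λ K H)ᵀ = ((-(lu / η)) • driftM Λ K H)ᵀ :=
    (Matrix.transpose_smul _ _).symm
  rw [htrans, Matrix.exp_transpose, Matrix.transpose_apply, hexp, hSdef, hTdef,
    Matrix.fromBlocks_multiply, Matrix.fromBlocks_multiply, Matrix.fromBlocks_apply₁₂]
  simp only [Matrix.one_mul, Matrix.mul_zero, Matrix.zero_mul, Matrix.mul_one, add_zero,
    zero_add]
  have hfinal : E * (-X) + X * (u • 1) = X * (u • (1 : Matrix (Fin n) (Fin n) ℝ) - E) := by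
    rw [Matrix.mul_sub, Matrix.mul_neg, hcomm]
    abel
  rw [hfinal]

end
end

section
/- Let Λ be a real n×n upper-triangular matrix with all diagonal entries equal to 1 (hence invertible with all eigenvalues equal to 1). Then for every fixed u ∈ (0,1), lim_{β→0+} (Λ − β·I)^{−1}·( u·I − exp((log u/β)·Λ) ) = u·Λ^{−1}, the limit being in any matrix norm. -/
open Matrix Filter Topology

noncomputable section

/-- Strictly upper triangular matrices are nilpotent: entry vanishing. -/
lemma strict_upper_pow_apply {n : ℕ} (N : Matrix (Fin n) (Fin n) ℝ)
    (h : ∀ i j : Fin n, (j : ℕ) ≤ i → N i j = 0) :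
    ∀ k (i j : Fin n), (j : ℕ) < i + k → (N ^ k) i j = 0 := by
  intro k
  induction k with
  | zero =>
    intro i j hij
    rw [pow_zero]
    exact Matrix.one_apply_ne (fun hh => by simp [hh] at hij)
  | succ k ih =>
    intro i j hij
    rw [pow_succ', Matrix.mul_apply]
    refine Finset.sum_eq_zero fun l _ => ?_
    rcases le_or_gt (l : ℕ) i with hl | hl
    · rw [h i l hl, zero_mul]
    · rw [ih l j (by omega), mul_zero]

lemma strict_upper_pow_eq_zero {n : ℕ} (N : Matrix (Fin n) (Fin n) ℝ)
    (h : ∀ i j : Fin n, (j : ℕ) ≤ i → N i j = 0) : N ^ n = 0 := by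
  ext i j
  exact strict_upper_pow_apply N h n i j (by omega)

lemma exp_smul_one {n : ℕ} (t : ℝ) :
    NormedSpace.exp (t • (1 : Matrix (Fin n) (Fin n) ℝ)) =
      Real.exp t • (1 : Matrix (Fin n) (Fin n) ℝ) := by
  rw [NormedSpace.exp_eq_tsum (𝕂 := ℝ)]
  have hs : Summable (fun k : ℕ => ((k.factorial : ℝ))⁻¹ * t ^ k) := by
    simpa [div_eq_mul_inv, mul_comm] using Real.summable_pow_div_factorial t
  calc ∑' k : ℕ, ((k.factorial : ℝ))⁻¹ • (t • (1 : Matrix (Fin n) (Fin n) ℝ)) ^ k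
      = ∑' k : ℕ, (((k.factorial : ℝ))⁻¹ * t ^ k) • (1 : Matrix (Fin n) (Fin n) ℝ) := by
        congr 1; funext k; rw [smul_pow, one_pow, smul_smul]
    _ = (∑' k : ℕ, ((k.factorial : ℝ))⁻¹ * t ^ k) • (1 : Matrix (Fin n) (Fin n) ℝ) :=
        hs.tsum_smul_const _
    _ = Real.exp t • (1 : Matrix (Fin n) (Fin n) ℝ) := by
        congr 1
        rw [Real.exp_eq_exp_ℝ, NormedSpace.exp_eq_tsum (𝕂 := ℝ)]
        simp [smul_eq_mul]

lemma exp_tendsto_zero {n : ℕ} (Λ : Matrix (Fin n) (Fin n) ℝ)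
    (hΛdiag : ∀ i, Λ i i = 1)
    (hΛupper : ∀ i j : Fin n, j < i → Λ i j = 0) :
    Tendsto (fun t : ℝ => NormedSpace.exp (t • Λ)) atBot (𝓝 0) := by
  set N : Matrix (Fin n) (Fin n) ℝ := Λ - 1 with hNdef
  have hN : ∀ i j : Fin n, (j : ℕ) ≤ i → N i j = 0 := by
    intro i j hij
    rcases eq_or_lt_of_le hij with h | h
    · have hji : j = i := Fin.ext h
      subst hji
      simp [hNdef, hΛdiag]
    · have hji : j < i := h
      have hne : i ≠ j := (Fin.lt_iff_val_lt_val.mpr h).ne'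
      simp [hNdef, hΛupper i j hji, Matrix.one_apply_ne hne]
  have hNn : N ^ n = 0 := strict_upper_pow_eq_zero N hN
  have hΛ : Λ = 1 + N := by simp [hNdef]
  -- exp formula
  have key : ∀ t : ℝ, NormedSpace.exp (t • Λ) =
      ∑ k ∈ Finset.range n, (Real.exp t * (((k.factorial : ℝ))⁻¹ * t ^ k)) • N ^ k := by
    intro t
    have hsmul : t • Λ = t • (1 : Matrix (Fin n) (Fin n) ℝ) + t • N := by
      rw [hΛ, smul_add]
    have hcomm : Commute (t • (1 : Matrix (Fin n) (Fin n) ℝ)) (t • N) :=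
      ((Commute.one_left (t • N)).smul_left t)
    rw [hsmul, Matrix.exp_add_of_commute _ _ hcomm, exp_smul_one]
    have hexpN : NormedSpace.exp (t • N) =
        ∑ k ∈ Finset.range n, (((k.factorial : ℝ))⁻¹ * t ^ k) • N ^ k := by
      have heq : NormedSpace.exp (t • N) =
          ∑' k : ℕ, ((k.factorial : ℝ))⁻¹ • (t • N) ^ k :=
        congrFun (NormedSpace.exp_eq_tsum (𝕂 := ℝ)) _
      rw [heq, tsum_eq_sum (s := Finset.range n) (fun k hk => ?_)]
      · congr 1; funext k; rw [smul_pow, smul_smul]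
      · have hk' : n ≤ k := by simpa using hk
        rw [smul_pow, pow_eq_zero_of_le hk' hNn, smul_zero, smul_zero]
    rw [hexpN, smul_mul_assoc, one_mul, Finset.smul_sum]
    refine Finset.sum_congr rfl fun k _ => ?_
    rw [smul_smul]
  simp only [key]
  have h0 : (0 : Matrix (Fin n) (Fin n) ℝ) =
      ∑ k ∈ Finset.range n, (0 : ℝ) • N ^ k := by simp
  rw [h0]
  refine tendsto_finset_sum _ fun k _ => ?_
  refine Tendsto.smul_const ?_ _
  -- coefficient → 0
  have h1 : Tendsto (fun x : ℝ => x ^ k * Real.exp (-x)) atTop (𝓝 0) :=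
    Real.tendsto_pow_mul_exp_neg_atTop_nhds_zero k
  have h2 : Tendsto (fun t : ℝ => (-t) ^ k * Real.exp t) atBot (𝓝 0) := by
    have := h1.comp tendsto_neg_atBot_atTop
    simpa [Function.comp_def] using this
  have h3 := h2.const_mul (((k.factorial : ℝ))⁻¹ * (-1) ^ k)
  rw [mul_zero] at h3
  refine h3.congr fun t => ?_
  have hsq : ((-1 : ℝ)) ^ k * (-1) ^ k = 1 := by rw [← mul_pow]; norm_num
  rw [neg_pow]
  linear_combination ((k.factorial : ℝ))⁻¹ * t ^ k * Real.exp t * hsq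

/-- **Linear approximation of the geomorphological block for fast streams.** If `Λ` is
upper triangular with unit diagonal, then for fixed `u ∈ (0,1)`,
`(Λ − β·I)⁻¹·(u·I − exp((log u/β)·Λ)) → u·Λ⁻¹` as `β → 0⁺`. -/
theorem tendsto_block_small_beta
    {n : ℕ} (hn : 0 < n) (Λ : Matrix (Fin n) (Fin n) ℝ)
    (hΛdiag : ∀ i, Λ i i = 1)
    (hΛupper : ∀ i j : Fin n, j < i → Λ i j = 0)
    (u : ℝ) (hu : u ∈ Set.Ioo (0:ℝ) 1) :
    Tendsto
      (fun β : ℝ => (Λ - β • (1 : Matrix (Fin n) (Fin n) ℝ))⁻¹ *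
        (u • (1 : Matrix (Fin n) (Fin n) ℝ) - NormedSpace.exp ((Real.log u / β) • Λ)))
      (𝓝[>] (0:ℝ)) (𝓝 (u • Λ⁻¹)) := by
  obtain ⟨hu0, hu1⟩ := hu
  have hlog : Real.log u < 0 := Real.log_neg hu0 hu1
  -- `log u / β → -∞`
  have hβ : Tendsto (fun β : ℝ => Real.log u / β) (𝓝[>] (0:ℝ)) atBot := by
    have h1 : Tendsto (fun β : ℝ => β⁻¹) (𝓝[>] (0:ℝ)) atTop := tendsto_inv_nhdsGT_zero
    have := Tendsto.const_mul_atTop_of_neg hlog h1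
    refine this.congr fun β => ?_
    rw [div_eq_mul_inv]
  -- the exponential term tends to 0
  have hexp : Tendsto
      (fun β : ℝ => NormedSpace.exp ((Real.log u / β) • Λ)) (𝓝[>] (0:ℝ)) (𝓝 0) :=
    (exp_tendsto_zero Λ hΛdiag hΛupper).comp hβ
  -- `Λ` is invertible
  have hbt : Λ.BlockTriangular id := fun i j h => hΛupper i j h
  have hdet : Λ.det = 1 := by
    rw [Matrix.det_of_upperTriangular hbt]
    simp [hΛdiag]
  -- the inverse factor tends to `Λ⁻¹`
  have hA : Tendsto (fun β : ℝ => Λ - β • (1 : Matrix (Fin n) (Fin n) ℝ))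
      (𝓝[>] (0:ℝ)) (𝓝 Λ) := by
    have hc : Continuous (fun β : ℝ => Λ - β • (1 : Matrix (Fin n) (Fin n) ℝ)) := by
      exact continuous_const.sub (continuous_id.smul continuous_const)
    have h2 : Tendsto (fun β : ℝ => Λ - β • (1 : Matrix (Fin n) (Fin n) ℝ))
        (𝓝[>] (0:ℝ)) (𝓝 (Λ - (0:ℝ) • 1)) :=
      (hc.tendsto 0).mono_left nhdsWithin_le_nhds
    simpa using h2
  have hcontdet : Continuous (fun M : Matrix (Fin n) (Fin n) ℝ => M.det) :=
    continuous_id.matrix_det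
  have hcontadj : Continuous (fun M : Matrix (Fin n) (Fin n) ℝ => M.adjugate) :=
    continuous_id.matrix_adjugate
  have hinv : Tendsto (fun β : ℝ => (Λ - β • (1 : Matrix (Fin n) (Fin n) ℝ))⁻¹)
      (𝓝[>] (0:ℝ)) (𝓝 Λ⁻¹) := by
    have hdet' : Tendsto (fun β : ℝ => (Λ - β • (1 : Matrix (Fin n) (Fin n) ℝ)).det)
        (𝓝[>] (0:ℝ)) (𝓝 Λ.det) := (hcontdet.tendsto Λ).comp hA
    have hadj' : Tendsto (fun β : ℝ => (Λ - β • (1 : Matrix (Fin n) (Fin n) ℝ)).adjugate)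
        (𝓝[>] (0:ℝ)) (𝓝 Λ.adjugate) := (hcontadj.tendsto Λ).comp hA
    have hdinv := hdet'.inv₀ (by rw [hdet]; norm_num)
    have := hdinv.smul hadj'
    simp only [Matrix.inv_def, Ring.inverse_eq_inv']
    exact this
  have hsub : Tendsto
      (fun β : ℝ => u • (1 : Matrix (Fin n) (Fin n) ℝ) -
        NormedSpace.exp ((Real.log u / β) • Λ))
      (𝓝[>] (0:ℝ)) (𝓝 (u • (1 : Matrix (Fin n) (Fin n) ℝ))) := by
    have := tendsto_const_nhds (x := u • (1 : Matrix (Fin n) (Fin n) ℝ))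
      (f := 𝓝[>] (0:ℝ)) |>.sub hexp
    simpa using this
  have := hinv.mul hsub
  rwa [mul_smul_comm, mul_one] at this

end
end

section
/- Let a = (a_1,…,a_n) with a_i > 0 for all i. Then ∫_0^1 ( Σ_{i=1}^n H_i·a_i·(m_1(u))_i ) / u du = H_1·(Λ^{−1}·a)_1. In particular, if Λᵀ·𝟙 = e_1 (𝟙 the all-ones vector, e_1 the first standard basis vector, as holds for the incidence matrix of a tree), then the integral equals H_1·Σ_{i=1}^n a_i; equivalently, the first geomorphological coefficient c_1 := (1/(K_1·Σ_{i=1}^n a_i))·∫_0^1 ( Σ_{i=1}^n H_i·a_i·(m_1(u))_i )/u du equals H_1/K_1. -/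
set_option maxHeartbeats 1000000


open MeasureTheory Matrix Filter Topology
open NormedSpace

noncomputable section

lemma entry_hasDerivAt {ι : Type*} [Fintype ι] [DecidableEq ι]
    (N B : Matrix ι ι ℝ) (i j : ι) (t : ℝ) :
    HasDerivAt (fun s : ℝ => (N * exp (s • B)) i j)
      ((N * (B * exp (t • B))) i j) t := by
  letI : SeminormedRing (Matrix ι ι ℝ) := Matrix.linftyOpSemiNormedRing
  letI : NormedRing (Matrix ι ι ℝ) := Matrix.linftyOpNormedRing
  letI : NormedAlgebra ℝ (Matrix ι ι ℝ) := Matrix.linftyOpNormedAlgebra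
  have h : HasDerivAt (fun s : ℝ => exp (s • B)) (B * exp (t • B)) t :=
    hasDerivAt_exp_smul_const' B t
  let L : Matrix ι ι ℝ →ₗ[ℝ] ℝ :=
    { toFun := fun A => (N * A) i j
      map_add' := by intro x y; simp [Matrix.mul_add]
      map_smul' := by intro c x; simp [Matrix.mul_smul] }
  have := (LinearMap.toContinuousLinearMap L).hasFDerivAt.comp_hasDerivAt t h
  exact this

lemma entry_hasDerivAt' {ι : Type*} [Fintype ι] [DecidableEq ι]
    (B : Matrix ι ι ℝ) (i j : ι) (t : ℝ) :
    HasDerivAt (fun s : ℝ => exp (s • B) i j) ((B * exp (t • B)) i j) t := by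
  simpa using entry_hasDerivAt 1 B i j t

-- dissipative bound: entries of exp(t•B') decay, given quadratic form bound
lemma exp_entry_decay_of_quad {ι : Type*} [Fintype ι] [DecidableEq ι]
    (B : Matrix ι ι ℝ) (c : ℝ) (hc : 0 < c)
    (hquad : ∀ x : ι → ℝ, (∑ k, x k * (∑ l, B k l * x l)) ≤ -(c/2) * ∑ k, x k ^ 2) :
    ∀ t : ℝ, 0 ≤ t → ∀ i j, |exp (t • B) i j| ≤ Real.exp (-(c/2) * t) := by
  intro t ht i j
  set y : ℝ → ι → ℝ := fun s k => exp (s • B) k j with hy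
  set g : ℝ → ℝ := fun s => ∑ k, (y s k) ^ 2 with hgdef
  have hyd : ∀ s k, HasDerivAt (fun u => y u k) ((B * exp (s • B)) k j) s :=
    fun s k => entry_hasDerivAt' B k j s
  have hgd : ∀ s, HasDerivAt g (∑ k, (2 : ℕ) * (y s k) ^ 1 * ((B * exp (s • B)) k j)) s := by
    intro s
    exact HasDerivAt.fun_sum fun k _ => ((hyd s k).pow 2)
  have hgd' : ∀ s, (∑ k, (2:ℕ) * (y s k) ^ 1 * ((B * exp (s • B)) k j)) ≤ -c * g s := by
    intro s
    have : (∑ k, (2:ℕ) * (y s k) ^ 1 * ((B * exp (s • B)) k j))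
        = 2 * ∑ k, y s k * (∑ l, B k l * y s l) := by
      rw [Finset.mul_sum]
      refine Finset.sum_congr rfl fun k _ => ?_
      simp [Matrix.mul_apply, pow_one, hy]
      ring
    rw [this]
    have h2 := hquad (y s)
    calc 2 * ∑ k, y s k * (∑ l, B k l * y s l) ≤ 2 * (-(c/2) * ∑ k, y s k ^ 2) := by linarith
      _ = -c * g s := by rw [hgdef]; ring
  set φ : ℝ → ℝ := fun s => Real.exp (c * s) * g s with hφdef
  have hφd : ∀ s, HasDerivAt φ
      ((c * Real.exp (c * s)) * g s + Real.exp (c * s) * (∑ k, (2:ℕ) * (y s k) ^ 1 * ((B * exp (s • B)) k j))) s := by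
    intro s
    have he : HasDerivAt (fun u => Real.exp (c * u)) (c * Real.exp (c * s)) s := by
      have := ((hasDerivAt_id s).const_mul c).exp
      simpa [mul_comm] using this
    exact he.mul (hgd s)
  have hφmono : Antitone φ := by
    refine antitone_of_hasDerivAt_nonpos hφd (fun s => ?_)
    show _ ≤ (0:ℝ)
    have h1 := hgd' s
    have hge : 0 ≤ Real.exp (c * s) := (Real.exp_pos _).le
    have hgnn : 0 ≤ g s := Finset.sum_nonneg fun k _ => sq_nonneg _
    nlinarith [Real.exp_pos (c * s)]
  have hφ0 : φ 0 = 1 := by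
    have : g 0 = 1 := by
      simp only [hgdef, hy, zero_smul, exp_zero]
      rw [Finset.sum_eq_single j]
      · simp [Matrix.one_apply]
      · intro k _ hk; simp [Matrix.one_apply, hk]
      · intro h; exact absurd (Finset.mem_univ j) h
    simp [hφdef, this]
  have hgt : g t ≤ Real.exp (-c * t) := by
    have h6 := hφmono ht
    rw [hφ0] at h6
    have hle : Real.exp (c * t) * g t ≤ 1 := h6
    have hpos := Real.exp_pos (c * t)
    have h4 : (Real.exp (c*t))⁻¹ * (Real.exp (c*t) * g t) ≤ (Real.exp (c*t))⁻¹ * 1 :=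
      mul_le_mul_of_nonneg_left hle (inv_nonneg.mpr hpos.le)
    rw [← mul_assoc, inv_mul_cancel₀ hpos.ne', one_mul, mul_one] at h4
    rwa [neg_mul, Real.exp_neg]
  have h5 : (y t i) ^ 2 ≤ (Real.exp (-(c/2) * t)) ^ 2 := by
    have h7 : (y t i) ^ 2 ≤ g t := Finset.single_le_sum (f := fun k => (y t k)^2)
      (fun k _ => sq_nonneg _) (Finset.mem_univ i)
    have h8 : (Real.exp (-(c/2) * t)) ^ 2 = Real.exp (-c * t) := by
      rw [sq, ← Real.exp_add]; ring_nf
    rw [h8]; exact h7.trans hgt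
  have : |y t i| ≤ Real.exp (-(c/2) * t) := by
    rw [← Real.sqrt_sq_eq_abs]
    calc Real.sqrt ((y t i)^2) ≤ Real.sqrt ((Real.exp (-(c/2) * t))^2) := Real.sqrt_le_sqrt h5
      _ = Real.exp (-(c/2) * t) := Real.sqrt_sq (Real.exp_pos _).le
  exact this

lemma exp_entry_decay {ι : Type*} [Fintype ι] [DecidableEq ι] [Nonempty ι]
    (B : Matrix ι ι ℝ) (w : ι → ℕ) (c : ℝ) (hc : 0 < c)
    (hdiag : ∀ k, B k k ≤ -c)
    (hw : ∀ k l, k ≠ l → B k l ≠ 0 → w k < w l) :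
    ∃ C : ℝ, 0 < C ∧ ∀ t : ℝ, 0 ≤ t → ∀ i j,
      |exp (t • B) i j| ≤ C * Real.exp (-(c/2) * t) := by
  classical
  set Nc : ℝ := (Fintype.card ι : ℝ) with hNc
  have hNc1 : 1 ≤ Nc := by
    have h := Fintype.card_pos (α := ι)
    rw [hNc]
    exact_mod_cast h
  set Mx : ℝ := ∑ k, ∑ l, |B k l| with hMx
  have hMx0 : 0 ≤ Mx := Finset.sum_nonneg fun k _ => Finset.sum_nonneg fun l _ => abs_nonneg _
  have hMxkl : ∀ k l, |B k l| ≤ Mx := by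
    intro k l
    have h1 : |B k l| ≤ ∑ l', |B k l'| :=
      Finset.single_le_sum (f := fun l' => |B k l'|) (fun l' _ => abs_nonneg _) (Finset.mem_univ l)
    have h2 : (∑ l', |B k l'|) ≤ Mx :=
      Finset.single_le_sum (f := fun k' => ∑ l', |B k' l'|)
        (fun k' _ => Finset.sum_nonneg fun l' _ => abs_nonneg _) (Finset.mem_univ k)
    exact h1.trans h2
  set r : ℝ := 1 + 2 * Nc * Mx / c with hr
  have hNc0 : (0:ℝ) < Nc := lt_of_lt_of_le one_pos hNc1
  have hr1 : 1 ≤ r := by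
    have h : 0 ≤ 2 * Nc * Mx / c := by positivity
    rw [hr]; linarith
  have hr0 : 0 < r := lt_of_lt_of_le one_pos hr1
  have hε : Mx / r ≤ c / (2 * Nc) := by
    rw [div_le_div_iff₀ hr0 (by positivity)]
    have h : c * r = c + 2 * Nc * Mx := by
      rw [hr]; field_simp
    nlinarith
  set S : Matrix ι ι ℝ := Matrix.diagonal (fun k => r ^ w k) with hS
  set S' : Matrix ι ι ℝ := Matrix.diagonal (fun k => (r ^ w k)⁻¹) with hS'
  have hrpow : ∀ k, (0:ℝ) < r ^ w k := fun k => pow_pos hr0 _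
  have hSS' : S * S' = 1 := by
    rw [hS, hS', diagonal_mul_diagonal]
    convert diagonal_one
    exact mul_inv_cancel₀ (hrpow _).ne'
  have hS'S : S' * S = 1 := by
    rw [hS, hS', diagonal_mul_diagonal]
    convert diagonal_one
    exact inv_mul_cancel₀ (hrpow _).ne'
  set B' : Matrix ι ι ℝ := S * B * S' with hB'
  have hB'entry : ∀ k l, B' k l = r ^ w k * B k l * (r ^ w l)⁻¹ := by
    intro k l
    rw [hB', hS, hS', Matrix.mul_diagonal, Matrix.diagonal_mul]
  have hB'diag : ∀ k, B' k k = B k k := by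
    intro k
    rw [hB'entry, mul_comm (r ^ w k) (B k k), mul_assoc, mul_inv_cancel₀ (hrpow k).ne', mul_one]
  have hB'off : ∀ k l, k ≠ l → |B' k l| ≤ c / (2 * Nc) := by
    intro k l hkl
    by_cases hz : B k l = 0
    · rw [hB'entry, hz]
      simp
      positivity
    · have hwkl := hw k l hkl hz
      have hpow : r ^ w k * (r ^ w l)⁻¹ ≤ r⁻¹ := by
        have h2 : r * r ^ w k ≤ r ^ w l := by
          have h3 : r ^ (w k + 1) ≤ r ^ w l := pow_le_pow_right₀ hr1 hwkl
          calc r * r ^ w k = r ^ (w k + 1) := (pow_succ' r (w k)).symm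
            _ ≤ r ^ w l := h3
        rw [← div_eq_mul_inv, div_le_iff₀ (hrpow l)]
        have h4 := mul_le_mul_of_nonneg_left h2 (inv_nonneg.mpr hr0.le)
        rwa [← mul_assoc, inv_mul_cancel₀ hr0.ne', one_mul] at h4
      have : |B' k l| ≤ Mx / r := by
        rw [hB'entry, abs_mul, abs_mul, abs_of_pos (hrpow k), abs_of_pos (inv_pos.mpr (hrpow l))]
        calc r ^ w k * |B k l| * (r ^ w l)⁻¹ = |B k l| * (r ^ w k * (r ^ w l)⁻¹) := by ring
          _ ≤ Mx * r⁻¹ := mul_le_mul (hMxkl k l) hpow (by positivity) hMx0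
          _ = Mx / r := (div_eq_mul_inv _ _).symm
      exact this.trans hε
  have hquad : ∀ x : ι → ℝ, (∑ k, x k * (∑ l, B' k l * x l)) ≤ -(c/2) * ∑ k, x k ^ 2 := by
    intro x
    have key : ∀ k l, x k * (B' k l * x l) ≤
        (if l = k then -c * x k ^ 2 else 0) + c / (2*Nc) * (|x k| * |x l|) := by
      intro k l
      by_cases h : l = k
      · subst h
        have h1 : x l * (B' l l * x l) ≤ -c * x l ^ 2 := by
          rw [hB'diag]
          have := hdiag l
          nlinarith [sq_nonneg (x l)]
        have h2 : 0 ≤ c / (2*Nc) * (|x l| * |x l|) := by positivity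
        rw [if_pos rfl]
        linarith
      · have h1 : x k * (B' k l * x l) ≤ |x k * (B' k l * x l)| := le_abs_self _
        have h2 : |x k * (B' k l * x l)| = |B' k l| * (|x k| * |x l|) := by
          rw [abs_mul, abs_mul]; ring
        have h3 : |B' k l| * (|x k| * |x l|) ≤ c / (2*Nc) * (|x k| * |x l|) :=
          mul_le_mul_of_nonneg_right (hB'off k l (fun hh => h hh.symm)) (by positivity)
        simp only [if_neg h]
        linarith [h1.trans (h2 ▸ h3)]
    have hsum : (∑ k, x k * (∑ l, B' k l * x l)) ≤
        ∑ k, ((-c * x k ^ 2) + ∑ l, c / (2*Nc) * (|x k| * |x l|)) := by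
      refine Finset.sum_le_sum fun k _ => ?_
      rw [Finset.mul_sum]
      have := Finset.sum_le_sum (fun l (_ : l ∈ Finset.univ) => key k l)
      refine this.trans (le_of_eq ?_)
      rw [Finset.sum_add_distrib, Finset.sum_ite_eq' Finset.univ k (fun _ => -c * x k ^ 2)]
      simp
    have hCS : (∑ k, |x k|) ^ 2 ≤ Nc * ∑ k, x k ^ 2 := by
      have := sq_sum_le_card_mul_sum_sq (s := Finset.univ) (f := fun k => |x k|)
      simpa [hNc, sq_abs] using this
    have hexp2 : (∑ k, ∑ l, c / (2*Nc) * (|x k| * |x l|))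
        = c/(2*Nc) * (∑ k, |x k|) ^ 2 := by
      calc (∑ k, ∑ l, c / (2*Nc) * (|x k| * |x l|))
          = ∑ k, c/(2*Nc) * ∑ l, |x k| * |x l| :=
            Finset.sum_congr rfl fun k _ => (Finset.mul_sum _ _ _).symm
        _ = c/(2*Nc) * ∑ k, ∑ l, |x k| * |x l| := (Finset.mul_sum _ _ _).symm
        _ = c/(2*Nc) * ((∑ k, |x k|) * (∑ l, |x l|)) := by rw [Finset.sum_mul_sum]
        _ = c/(2*Nc) * (∑ k, |x k|) ^ 2 := by rw [sq]
    have hexp : (∑ k, ((-c * x k ^ 2) + ∑ l, c / (2*Nc) * (|x k| * |x l|)))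
        = -c * (∑ k, x k ^ 2) + c/(2*Nc) * (∑ k, |x k|) ^ 2 := by
      rw [Finset.sum_add_distrib, hexp2, ← Finset.mul_sum]
    have hS0 : (0:ℝ) ≤ ∑ k, x k ^ 2 := Finset.sum_nonneg fun k _ => sq_nonneg _
    have h9 : c/(2*Nc) * ((∑ k, |x k|)^2) ≤ c/(2*Nc) * (Nc * ∑ k, x k ^ 2) :=
      mul_le_mul_of_nonneg_left hCS (by positivity)
    have h10 : c/(2*Nc) * (Nc * ∑ k, x k ^ 2) = (c/2) * ∑ k, x k ^ 2 := by
      field_simp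
    calc (∑ k, x k * (∑ l, B' k l * x l))
        ≤ ∑ k, ((-c * x k ^ 2) + ∑ l, c / (2*Nc) * (|x k| * |x l|)) := hsum
      _ = -c * (∑ k, x k ^ 2) + c/(2*Nc) * (∑ k, |x k|) ^ 2 := hexp
      _ ≤ -c * (∑ k, x k ^ 2) + (c/2) * ∑ k, x k ^ 2 := by linarith
      _ = -(c/2) * ∑ k, x k ^ 2 := by ring
  -- conjugation
  have hSunit : IsUnit S := ⟨⟨S, S', hSS', hS'S⟩, rfl⟩
  have hSinv : S⁻¹ = S' := Matrix.inv_eq_right_inv hSS'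
  have hexpB : ∀ t : ℝ, exp (t • B) = S' * exp (t • B') * S := by
    intro t
    have hc1 : exp (t • B') = S * exp (t • B) * S' := by
      have : t • B' = S * (t • B) * S⁻¹ := by
        rw [hSinv, hB', mul_smul_comm, smul_mul_assoc]
      rw [this, ← hSinv, Matrix.exp_conj S (t • B) hSunit, hSinv]
    rw [hc1]
    have h2 : S' * (S * exp (t • B) * S') * S
        = (S' * S) * exp (t • B) * (S' * S) := by
      simp only [Matrix.mul_assoc]
    rw [h2, hS'S, one_mul, mul_one]
  refine ⟨∑ k, r ^ w k, Finset.sum_pos (fun k _ => pow_pos hr0 _) Finset.univ_nonempty, fun t ht i j => ?_⟩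
  have hd := exp_entry_decay_of_quad B' c hc hquad t ht i j
  rw [hexpB t, hS', hS, Matrix.mul_diagonal, Matrix.diagonal_mul]
  have ha1 : (r ^ w i)⁻¹ ≤ 1 := inv_le_one_of_one_le₀ (one_le_pow₀ hr1)
  have ha2 : r ^ w j ≤ ∑ k, r ^ w k :=
    Finset.single_le_sum (f := fun k => r ^ w k) (fun k _ => (pow_pos hr0 _).le) (Finset.mem_univ j)
  rw [abs_mul, abs_mul, abs_of_pos (inv_pos.mpr (hrpow i)), abs_of_pos (hrpow j)]
  have b1 : (r ^ w i)⁻¹ * |exp (t • B') i j| ≤ 1 * Real.exp (-(c/2)*t) :=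
    mul_le_mul ha1 hd (abs_nonneg _) one_pos.le
  have b2 : ((r ^ w i)⁻¹ * |exp (t • B') i j|) * r ^ w j
      ≤ (1 * Real.exp (-(c/2)*t)) * (∑ k, r ^ w k) :=
    mul_le_mul b1 ha2 (pow_pos hr0 _).le (by positivity)
  calc (r ^ w i)⁻¹ * |exp (t • B') i j| * r ^ w j
      ≤ (1 * Real.exp (-(c/2)*t)) * (∑ k, r ^ w k) := b2
    _ = (∑ k, r ^ w k) * Real.exp (-(c/2) * t) := by ring

lemma integral_exp_entry {ι : Type*} [Fintype ι] [DecidableEq ι]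
    (B N : Matrix ι ι ℝ) (hNB : N * B = 1)
    (C c : ℝ) (hc : 0 < c)
    (hdecay : ∀ t : ℝ, 0 ≤ t → ∀ i j, |exp (t • B) i j| ≤ C * Real.exp (-(c/2) * t))
    (i j : ι) :
    IntegrableOn (fun t => exp (t • B) i j) (Set.Ioi (0:ℝ)) ∧
      ∫ t in Set.Ioi (0:ℝ), exp (t • B) i j = - N i j := by
  have hder : ∀ t : ℝ, HasDerivAt (fun s => (N * exp (s • B)) i j) (exp (t • B) i j) t := by
    intro t
    have h := entry_hasDerivAt N B i j t
    rwa [← Matrix.mul_assoc, hNB, Matrix.one_mul] at h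
  have hcont : Continuous (fun t : ℝ => exp (t • B) i j) := by
    have : ∀ t : ℝ, HasDerivAt (fun s => exp (s • B) i j) ((B * exp (t • B)) i j) t :=
      fun t => entry_hasDerivAt' B i j t
    exact continuous_iff_continuousAt.mpr fun t => (this t).continuousAt
  have hint : IntegrableOn (fun t => exp (t • B) i j) (Set.Ioi (0:ℝ)) := by
    have hg : IntegrableOn (fun t : ℝ => C * Real.exp (-(c/2) * t)) (Set.Ioi (0:ℝ)) :=
      (exp_neg_integrableOn_Ioi 0 (by linarith : (0:ℝ) < c/2)).const_mul C
    refine Integrable.mono' hg (hcont.aestronglyMeasurable.restrict) ?_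
    rw [ae_restrict_iff' measurableSet_Ioi]
    filter_upwards with t ht
    rw [Real.norm_eq_abs]
    exact hdecay t (le_of_lt ht) i j
  have htend : Tendsto (fun t : ℝ => (N * exp (t • B)) i j) atTop (𝓝 0) := by
    have h1 : ∀ t : ℝ, (N * exp (t • B)) i j = ∑ k, N i k * exp (t • B) k j := by
      intro t; rw [Matrix.mul_apply]
    simp only [h1]
    have : Tendsto (fun t : ℝ => ∑ k : ι, N i k * exp (t • B) k j) atTop
        (𝓝 (∑ k : ι, 0)) := by
      refine tendsto_finset_sum _ fun k _ => ?_
      have hek : Tendsto (fun t : ℝ => exp (t • B) k j) atTop (𝓝 0) := by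
        refine squeeze_zero_norm' (a := fun t => C * Real.exp (-(c/2) * t)) ?_ ?_
        · filter_upwards [eventually_ge_atTop (0:ℝ)] with t ht
          rw [Real.norm_eq_abs]
          exact hdecay t ht k j
        · have h2 : Tendsto (fun t : ℝ => -(c/2) * t) atTop atBot :=
            Tendsto.const_mul_atTop_of_neg (by linarith) tendsto_id
          have h3 : Tendsto (fun t : ℝ => Real.exp (-(c/2) * t)) atTop (𝓝 0) :=
            Real.tendsto_exp_atBot.comp h2
          simpa using h3.const_mul C
      simpa using hek.const_mul (N i k)
    simpa using this
  refine ⟨hint, ?_⟩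
  have := integral_Ioi_of_hasDerivAt_of_tendsto' (f := fun s => (N * exp (s • B)) i j)
    (fun x _ => hder x) hint htend
  rw [this]
  show 0 - (N * exp ((0:ℝ) • B)) i j = - N i j
  rw [zero_smul, exp_zero, Matrix.mul_one, zero_sub]

/-- **The first geomorphological coefficient.**
`∫_0^1 (Σ_i H_i a_i (m_1(u))_i)/u du = H_1·(Λ⁻¹a)_1`; in particular, if `Λᵀ𝟙 = e_1`
(as for the incidence matrix of a tree), the integral equals `H_1·Σ_i a_i`,
i.e. `c_1 = H_1/K_1`. -/
theorem first_geomorphological_coefficient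
    {n : ℕ} (hn : 0 < n) (Λ : Matrix (Fin n) (Fin n) ℝ) (K H : Fin n → ℝ)
    (hΛdiag : ∀ i, Λ i i = 1)
    (hΛupper : ∀ i j : Fin n, j < i → Λ i j = 0)
    (hΛoff : ∀ i j : Fin n, i ≠ j → Λ i j ≤ 0)
    (hΛinv : IsUnit Λ.det)
    (hK : ∀ i, 0 < K i) (hH : ∀ i, 0 < H i)
    (a : Fin n → ℝ) (ha : ∀ i, 0 < a i) :
    (∫ u in Set.Ioc (0:ℝ) 1, (∑ i, H i * a i * mVec hn Λ K H ⟨0, hn⟩ u i) / u)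
        = H ⟨0, hn⟩ * (Λ⁻¹.mulVec a) ⟨0, hn⟩ ∧
    ((Λᵀ.mulVec (fun _ => (1:ℝ)) = fun j => if j = ⟨0, hn⟩ then 1 else 0) →
      ((∫ u in Set.Ioc (0:ℝ) 1, (∑ i, H i * a i * mVec hn Λ K H ⟨0, hn⟩ u i) / u)
          = H ⟨0, hn⟩ * ∑ i, a i ∧
        (1 / (K ⟨0, hn⟩ * ∑ i, a i)) *
            (∫ u in Set.Ioc (0:ℝ) 1, (∑ i, H i * a i * mVec hn Λ K H ⟨0, hn⟩ u i) / u)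
          = H ⟨0, hn⟩ / K ⟨0, hn⟩)) := by
  classical
  have e0 : Fin n := ⟨0, hn⟩
  haveI : Nonempty (Fin n) := ⟨⟨0, hn⟩⟩
  set M : Matrix (Fin n ⊕ Fin n) (Fin n ⊕ Fin n) ℝ := driftM Λ K H with hM
  set A : Matrix (Fin n ⊕ Fin n) (Fin n ⊕ Fin n) ℝ := Mᵀ with hA
  set w : Fin n ⊕ Fin n → ℕ :=
    Sum.elim (fun i : Fin n => n + (n - 1 - (i:ℕ))) (fun i : Fin n => n - 1 - (i:ℕ)) with hw
  -- lower bound on diagonal magnitudes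
  obtain ⟨iK, _, hiK⟩ := Finset.exists_min_image Finset.univ K ⟨⟨0,hn⟩, Finset.mem_univ _⟩
  obtain ⟨iH, _, hiH⟩ := Finset.exists_min_image Finset.univ H ⟨⟨0,hn⟩, Finset.mem_univ _⟩
  set c : ℝ := min (K iK) (H iH) with hc
  have hc0 : 0 < c := lt_min (hK iK) (hH iH)
  have hcK : ∀ i, c ≤ K i := fun i => le_trans (min_le_left _ _) (hiK i (Finset.mem_univ i))
  have hcH : ∀ i, c ≤ H i := fun i => le_trans (min_le_right _ _) (hiH i (Finset.mem_univ i))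
  have hAdiag : ∀ k, A k k ≤ -c := by
    intro k
    cases k with
    | inl i =>
        have : A (Sum.inl i) (Sum.inl i) = -(K i) := by
          simp [hA, hM, driftM, Matrix.diagonal_mul, hΛdiag i]
        rw [this]; linarith [hcK i]
    | inr i =>
        have : A (Sum.inr i) (Sum.inr i) = -(H i) := by
          simp [hA, hM, driftM]
        rw [this]; linarith [hcH i]
  have hweight : ∀ k l, k ≠ l → A k l ≠ 0 → w k < w l := by
    intro k l hkl hne
    cases k with
    | inl j =>
      cases l with
      | inl i =>
          have hval : A (Sum.inl j) (Sum.inl i) = -(K i * Λ i j) := by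
            simp [hA, hM, driftM, Matrix.diagonal_mul]
          have hΛne : Λ i j ≠ 0 := by
            intro h; rw [hval, h] at hne; simp at hne
          have hij : i ≠ j := fun h => hkl (by rw [h])
          have hij' : (i:ℕ) < (j:ℕ) := by
            rcases lt_or_ge (i:ℕ) (j:ℕ) with h | h
            · exact h
            · exfalso
              rcases eq_or_lt_of_le h with h' | h'
              · exact hij (Fin.ext h'.symm)
              · exact hΛne (hΛupper i j (by exact h'))
          simp only [hw, Sum.elim_inl]
          have := j.isLt; have := i.isLt
          omega
      | inr i =>
          exfalso
          apply hne
          simp [hA, hM, driftM]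
    | inr i =>
      cases l with
      | inl j =>
          have hval : A (Sum.inr i) (Sum.inl j) = Matrix.diagonal K j i := by
            simp [hA, hM, driftM]
          have hji : j = i := by
            by_contra h
            rw [hval, Matrix.diagonal_apply_ne _ h] at hne
            exact hne rfl
          subst hji
          simp only [hw, Sum.elim_inl, Sum.elim_inr]
          have := j.isLt
          omega
      | inr j =>
          exfalso
          have hij : i ≠ j := fun h => hkl (by rw [h])
          apply hne
          simp [hA, hM, driftM, Matrix.diagonal_apply_ne _ (fun h => hij h.symm)]
  obtain ⟨C, hC0, hdecay⟩ := exp_entry_decay A w c hc0 hAdiag hweight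
  -- явный inverse
  set dHi : Matrix (Fin n) (Fin n) ℝ := Matrix.diagonal (fun i => (H i)⁻¹) with hdHi
  set dKi : Matrix (Fin n) (Fin n) ℝ := Matrix.diagonal (fun i => (K i)⁻¹) with hdKi
  set NB : Matrix (Fin n ⊕ Fin n) (Fin n ⊕ Fin n) ℝ :=
    Matrix.fromBlocks (-(Λ⁻¹ * dKi)) (-(Λ⁻¹ * dHi)) 0 (-dHi) with hNB
  have hdKK : dKi * Matrix.diagonal K = 1 := by
    rw [hdKi, diagonal_mul_diagonal]
    rw [show (fun i => (K i)⁻¹ * K i) = fun _ => (1:ℝ) from funext fun i => inv_mul_cancel₀ (hK i).ne']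
    exact diagonal_one
  have hKKi : Matrix.diagonal K * dKi = 1 := by
    rw [hdKi, diagonal_mul_diagonal]
    rw [show (fun i => K i * (K i)⁻¹) = fun _ => (1:ℝ) from funext fun i => mul_inv_cancel₀ (hK i).ne']
    exact diagonal_one
  have hHHi : Matrix.diagonal H * dHi = 1 := by
    rw [hdHi, diagonal_mul_diagonal]
    rw [show (fun i => H i * (H i)⁻¹) = fun _ => (1:ℝ) from funext fun i => mul_inv_cancel₀ (hH i).ne']
    exact diagonal_one
  have hMN : M * NB = 1 := by
    rw [hM, driftM, hNB, Matrix.fromBlocks_multiply]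
    have h11 : -(Matrix.diagonal K * Λ) * -(Λ⁻¹ * dKi) + Matrix.diagonal K * 0 = 1 := by
      rw [Matrix.mul_zero, add_zero, Matrix.neg_mul, Matrix.mul_neg, neg_neg,
        Matrix.mul_assoc (Matrix.diagonal K) Λ (Λ⁻¹ * dKi),
        ← Matrix.mul_assoc Λ Λ⁻¹ dKi, Matrix.mul_nonsing_inv _ hΛinv, Matrix.one_mul, hKKi]
    have h12 : -(Matrix.diagonal K * Λ) * -(Λ⁻¹ * dHi) + Matrix.diagonal K * -dHi = 0 := by
      rw [Matrix.neg_mul, Matrix.mul_neg, neg_neg, Matrix.mul_neg,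
        Matrix.mul_assoc (Matrix.diagonal K) Λ (Λ⁻¹ * dHi),
        ← Matrix.mul_assoc Λ Λ⁻¹ dHi, Matrix.mul_nonsing_inv _ hΛinv, Matrix.one_mul]
      exact add_neg_cancel _
    have h21 : (0 : Matrix (Fin n) (Fin n) ℝ) * -(Λ⁻¹ * dKi) + -(Matrix.diagonal H) * 0 = 0 := by
      rw [Matrix.zero_mul, Matrix.mul_zero, add_zero]
    have h22 : (0 : Matrix (Fin n) (Fin n) ℝ) * -(Λ⁻¹ * dHi) + -(Matrix.diagonal H) * -dHi = 1 := by
      rw [Matrix.zero_mul, zero_add, Matrix.neg_mul, Matrix.mul_neg, neg_neg, hHHi]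
    rw [h11, h12, h21, h22, Matrix.fromBlocks_one]
  have hNA : NBᵀ * A = 1 := by
    rw [hA, ← Matrix.transpose_mul, hMN, Matrix.transpose_one]
  have hI := fun i : Fin n =>
    integral_exp_entry A NBᵀ hNA C c hc0 hdecay (Sum.inr i) (Sum.inl (⟨0, hn⟩ : Fin n))
  have hval : ∀ i : Fin n, ∫ t in Set.Ioi (0:ℝ), exp (t • A) (Sum.inr i) (Sum.inl ⟨0, hn⟩)
      = Λ⁻¹ ⟨0, hn⟩ i * (H i)⁻¹ := by
    intro i
    rw [(hI i).2]
    have : NBᵀ (Sum.inr i) (Sum.inl (⟨0,hn⟩ : Fin n)) = -(Λ⁻¹ * dHi) ⟨0,hn⟩ i := by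
      rw [Matrix.transpose_apply, hNB]
      simp
    rw [this, hdHi]
    simp [Matrix.mul_diagonal]
  -- substitution
  set h0 : ℝ := H ⟨0, hn⟩ with hh0def
  have hh0 : 0 < h0 := hH _
  set F : ℝ → ℝ := fun t => ∑ i, H i * a i * exp (t • A) (Sum.inr i) (Sum.inl ⟨0, hn⟩) with hF
  set f : ℝ → ℝ := fun t => Real.exp (-(h0 * t)) with hf
  set G : ℝ → ℝ := fun u => (∑ i, H i * a i * mVec hn Λ K H ⟨0, hn⟩ u i) / u with hG
  have himg : f '' Set.Ioi (0:ℝ) = Set.Ioo (0:ℝ) 1 := by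
    ext u
    constructor
    · rintro ⟨t, ht, rfl⟩
      refine ⟨Real.exp_pos _, Real.exp_lt_one_iff.mpr ?_⟩
      have : (0:ℝ) < h0 * t := mul_pos hh0 ht
      linarith
    · rintro ⟨hu0, hu1⟩
      refine ⟨-Real.log u / h0, ?_, ?_⟩
      · have hlog : Real.log u < 0 := Real.log_neg hu0 hu1
        exact div_pos (by linarith) hh0
      · show Real.exp (-(h0 * (-Real.log u / h0))) = u
        rw [show -(h0 * (-Real.log u / h0)) = Real.log u from by field_simp]
        exact Real.exp_log hu0
  have hfderiv : ∀ t ∈ Set.Ioi (0:ℝ),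
      HasDerivWithinAt f (Real.exp (-(h0 * t)) * (-h0)) (Set.Ioi (0:ℝ)) t := by
    intro t _
    have h1 : HasDerivAt (fun s : ℝ => -(h0 * s)) (-h0) t := by
      simpa using ((hasDerivAt_id t).const_mul h0).fun_neg
    exact (h1.exp).hasDerivWithinAt
  have hinj : Set.InjOn f (Set.Ioi (0:ℝ)) := by
    intro s _ t _ hst
    have : -(h0 * s) = -(h0 * t) := Real.exp_eq_exp.mp hst
    have := neg_injective this
    exact mul_left_cancel₀ hh0.ne' this
  have hmv : ∀ t : ℝ, ∀ i : Fin n,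
      mVec hn Λ K H ⟨0, hn⟩ (f t) i = exp (t • A) (Sum.inr i) (Sum.inl ⟨0, hn⟩) := by
    intro t i
    show NormedSpace.exp ((-(Real.log (f t) / H ⟨0, hn⟩)) • (driftM Λ K H)ᵀ)
      (Sum.inr i) (Sum.inl ⟨0, hn⟩) = _
    rw [show (driftM Λ K H)ᵀ = A from by rw [hA, hM]]
    rw [show -(Real.log (f t) / H ⟨0, hn⟩) = t from by
      rw [hf]; show -(Real.log (Real.exp (-(h0 * t))) / h0) = t
      rw [Real.log_exp]; field_simp]
  have hsub : (∫ u in Set.Ioc (0:ℝ) 1, G u) = ∫ t in Set.Ioi (0:ℝ), h0 * F t := by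
    rw [integral_Ioc_eq_integral_Ioo, ← himg,
      integral_image_eq_integral_abs_deriv_smul measurableSet_Ioi hfderiv hinj G]
    refine setIntegral_congr_fun measurableSet_Ioi ?_
    intro t ht
    show |Real.exp (-(h0 * t)) * (-h0)| • G (f t) = h0 * F t
    have hGft : G (f t) = F t / Real.exp (-(h0 * t)) := by
      rw [hG]
      show (∑ i, H i * a i * mVec hn Λ K H ⟨0, hn⟩ (f t) i) / f t = F t / Real.exp (-(h0 * t))
      rw [hf, hF]
      congr 1
      exact Finset.sum_congr rfl fun i _ => by rw [hmv t i]
    rw [hGft, abs_mul, abs_neg, abs_of_pos hh0, abs_of_pos (Real.exp_pos _), smul_eq_mul]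
    field_simp
  have hint : ∀ i : Fin n, Integrable
      (fun t => H i * a i * exp (t • A) (Sum.inr i) (Sum.inl (⟨0, hn⟩ : Fin n)))
      (volume.restrict (Set.Ioi (0:ℝ))) := by
    intro i
    exact ((hI i).1.const_mul (H i * a i))
  have hFint : (∫ t in Set.Ioi (0:ℝ), F t)
      = ∑ i, H i * a i * (Λ⁻¹ ⟨0, hn⟩ i * (H i)⁻¹) := by
    rw [hF]
    rw [integral_finset_sum Finset.univ (fun i _ => hint i)]
    refine Finset.sum_congr rfl fun i _ => ?_
    rw [MeasureTheory.integral_const_mul, hval i]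
  have hmain : (∫ u in Set.Ioc (0:ℝ) 1, G u) = h0 * (Λ⁻¹.mulVec a) ⟨0, hn⟩ := by
    rw [hsub, MeasureTheory.integral_const_mul, hFint]
    congr 1
    have : ∀ i : Fin n, H i * a i * (Λ⁻¹ ⟨0, hn⟩ i * (H i)⁻¹) = Λ⁻¹ ⟨0, hn⟩ i * a i := by
      intro i
      have h4 : H i * a i * (Λ⁻¹ ⟨0, hn⟩ i * (H i)⁻¹)
          = (H i * (H i)⁻¹) * (Λ⁻¹ ⟨0, hn⟩ i * a i) := by ring
      rw [h4, mul_inv_cancel₀ (hH i).ne', one_mul]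
    rw [Finset.sum_congr rfl fun i _ => this i]
    rw [Matrix.mulVec]
    rfl
  constructor
  · exact hmain
  · intro hone
    have hrow : ∀ i : Fin n, Λ⁻¹ ⟨0, hn⟩ i = 1 := by
      have hv : Matrix.vecMul (fun _ => (1:ℝ)) Λ = fun j => if j = (⟨0, hn⟩ : Fin n) then 1 else 0 := by
        funext j
        rw [← congrFun hone j]
        simp [Matrix.vecMul, Matrix.mulVec, dotProduct, Matrix.transpose_apply, mul_comm]
      have h2 : Matrix.vecMul (Matrix.vecMul (fun _ => (1:ℝ)) Λ) Λ⁻¹ = fun _ => (1:ℝ) := by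
        rw [Matrix.vecMul_vecMul, Matrix.mul_nonsing_inv _ hΛinv, Matrix.vecMul_one]
      intro i
      have h3 := congrFun h2 i
      rw [hv] at h3
      simpa [Matrix.vecMul, dotProduct, ite_mul] using h3
    have hsum : (Λ⁻¹.mulVec a) ⟨0, hn⟩ = ∑ i, a i := by
      show dotProduct (Λ⁻¹ ⟨0, hn⟩) a = ∑ i, a i
      rw [dotProduct]
      exact Finset.sum_congr rfl fun i _ => by rw [hrow i, one_mul]
    have hSa : (0:ℝ) < ∑ i, a i :=
      Finset.sum_pos (fun i _ => ha i) Finset.univ_nonempty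
    refine ⟨by rw [hmain, hsum], ?_⟩
    rw [hmain, hsum]
    have h4 : K ⟨0, hn⟩ ≠ 0 := (hK _).ne'
    have h5 : (∑ i, a i) ≠ 0 := hSa.ne'
    field_simp

end
end
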